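/- arXiv:math/0701733 — 7 statements merged into one kernel-verified Lean document; each statement's English description precedes it below -/
import Mathlib

section
/- The number of Dyck paths of length 2n in which every k-ascent (maximal run of k up-steps) is assigned one of C_k colours (where C_k is the k-th Catalan number) equals (1/(2n+1)) * binomial(3n, n). -/
open Finset PowerSeries

/-- A Dyck word: list of booleans (`true` = up-step, `false` = down-step),
with equally many up- and down-steps, never going below the x-axis. -/
def IsDyckWord (p : List Bool) : Prop :=
  (∀ k, (p.take k).count false ≤ (p.take k).count true) ∧
    p.count true = p.count false

/-- The lengths of the maximal runs of up-steps (ascents) of a path, in order. -/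
def ascentLengths (p : List Bool) : List ℕ :=
  ((p.splitOn false).map List.length).filter (fun k => 0 < k)

/-- Dyck paths of semilength `n` together with a colour for each ascent,
where a `k`-ascent may receive any colour `c` with `L k c`. -/
def ColouredDyck {α : Type*} (n : ℕ) (L : ℕ → α → Prop) :
    Set (List Bool × List α) :=
  {pc | IsDyckWord pc.1 ∧ pc.1.length = 2 * n ∧
    pc.2.length = (ascentLengths pc.1).length ∧
    ∀ q ∈ (ascentLengths pc.1).zip pc.2, L q.1 q.2}

namespace CD

/-- decode a 2-Dyck word into (path, colour-stream); state = current colour height -/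
def dec : ℕ → List Bool → List Bool × List Bool
  | _, [] => ([], [])
  | h, true :: w => ((dec (h+1) w).1.cons true, (dec (h+1) w).2.cons true)
  | 0, false :: w => ((dec 0 w).1.cons false, (dec 0 w).2)
  | h+1, false :: w => ((dec h w).1, (dec h w).2.cons false)

/-- final state of decode -/
def decH : ℕ → List Bool → ℕ
  | h, [] => h
  | h, true :: w => decH (h+1) w
  | 0, false :: w => decH 0 w
  | h+1, false :: w => decH h w

/-- encode (path, colour-stream) into a 2-Dyck word -/
def enc : ℕ → List Bool → List Bool → List Bool
  | h, p, false :: c => false :: enc (h-1) p c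
  | h, true :: p, c => true :: enc (h+1) p c.tail
  | h, false :: p, c => false :: enc h p c
  | _, [], _ => []
termination_by h p c => p.length + c.length
decreasing_by all_goals (simp [List.length_tail]; try omega)

@[simp] theorem enc_fd (h p c) : enc h p (false :: c) = false :: enc (h-1) p c := by
  cases p with
  | nil => rw [enc]
  | cons b p => cases b <;> rw [enc]

@[simp] theorem enc_t (h p c) : enc h (true :: p) (true :: c) = true :: enc (h+1) p c := by
  rw [enc] <;> simp

@[simp] theorem enc_tn (h p) : enc h (true :: p) [] = true :: enc (h+1) p [] := by
  rw [enc] <;> simp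

@[simp] theorem enc_pdn (h p) : enc h (false :: p) [] = false :: enc h p [] := by
  rw [enc] <;> simp

@[simp] theorem enc_pdt (h p c) : enc h (false :: p) (true :: c) = false :: enc h p (true :: c) := by
  rw [enc] <;> simp

@[simp] theorem enc_nn (h) : enc h [] [] = [] := by rw [enc] <;> simp

@[simp] theorem enc_nt (h c) : enc h [] (true :: c) = [] := by rw [enc] <;> simp

/-- validity of a (path, colour-stream) pair at colour height h -/
inductive V : ℕ → List Bool → List Bool → Prop
  | nil : V 0 [] []
  | up {h p c} : V (h+1) p c → V h (true :: p) (true :: c)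
  | cd {h p c} : V h p c → V (h+1) p (false :: c)
  | pd {p c} : V 0 p c → V 0 (false :: p) c

theorem V0_c {p c} (hv : V 0 p c) : c = [] ∨ ∃ c', c = true :: c' := by
  generalize hh : 0 = h at hv
  induction hv with
  | nil => left; rfl
  | up _ _ => right; exact ⟨_, rfl⟩
  | cd _ _ => omega
  | pd _ ih => exact ih hh

theorem dec_enc {h p c} (hv : V h p c) : dec h (enc h p c) = (p, c) := by
  induction hv with
  | nil => simp [dec]
  | up _ ih => simp [dec, ih]
  | cd _ ih => simp [dec, ih]
  | pd hv' ih =>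
      rcases V0_c hv' with rfl | ⟨c', rfl⟩ <;> simp [dec, ih]

theorem dec0_c (w) : (dec 0 w).2 = [] ∨ ∃ c', (dec 0 w).2 = true :: c' := by
  induction w with
  | nil => left; rfl
  | cons b w ih =>
      cases b
      · simpa [dec] using ih
      · right; exact ⟨(dec 1 w).2, by simp [dec]⟩

theorem enc_dec : ∀ (w : List Bool) (h : ℕ), enc h (dec h w).1 (dec h w).2 = w := by
  intro w
  induction w with
  | nil => intro h; simp [dec]
  | cons b w ih =>
      intro h
      cases b
      · match h with
        | 0 =>
            rcases dec0_c w with h2 | ⟨c', h2⟩ <;> simp [dec, h2] <;>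
              · have := ih 0; rwa [h2] at this
        | h+1 => simp [dec, ih]
      · simp [dec, ih]

theorem dec_V : ∀ (w : List Bool) (h : ℕ), decH h w = 0 → V h (dec h w).1 (dec h w).2 := by
  intro w
  induction w with
  | nil => intro h hh; simp [decH] at hh; subst hh; simpa [dec] using V.nil
  | cons b w ih =>
      intro h hh
      cases b
      · match h with
        | 0 => simpa [dec] using V.pd (ih 0 (by simpa [decH] using hh))
        | h+1 => simpa [dec] using V.cd (ih h (by simpa [decH] using hh))
      · simpa [dec] using V.up (ih (h+1) (by simpa [decH] using hh))


theorem count_tf (l : List Bool) : l.count true + l.count false = l.length := by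
  induction l with
  | nil => simp
  | cons b l ih => cases b <;> simp [List.count_cons] <;> omega

theorem dec_count (w : List Bool) : ∀ h,
    (dec h w).1.count true = w.count true ∧
    (dec h w).2.count true = w.count true ∧
    (dec h w).1.count false + (dec h w).2.count false = w.count false ∧
    (dec h w).2.count false + decH h w = h + (dec h w).2.count true := by
  induction w with
  | nil => intro h; simp [dec, decH]
  | cons b w ih =>
      intro h
      cases b
      · match h with
        | 0 => have := ih 0; simp [dec, decH, List.count_cons]; omega
        | h+1 => have := ih h; simp [dec, decH, List.count_cons]; omega
      · have := ih (h+1); simp [dec, decH, List.count_cons]; omega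

theorem dec_nonneg : ∀ (w : List Bool) (h a : ℕ),
    (∀ k, (w.take k).count false ≤ 2 * (w.take k).count true + a + h) →
    (∀ k, (((dec h w).1).take k).count false ≤ (((dec h w).1).take k).count true + a) ∧
    (∀ k, (((dec h w).2).take k).count false ≤ (((dec h w).2).take k).count true + h) := by
  intro w
  induction w with
  | nil => intro h a hw; simp [dec]
  | cons b w ih =>
    intro h a hw
    cases b
    · match h with
      | 0 =>
        have ha : 1 ≤ a := by have := hw 1; simpa using this
        obtain ⟨hp, hc⟩ := ih 0 (a-1) (fun k => by
          have := hw (k+1); simp [List.count_cons] at this ⊢; omega)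
        refine ⟨fun k => ?_, fun k => ?_⟩
        · match k with
          | 0 => simp
          | k+1 => have := hp k; simp [dec, List.count_cons] at this ⊢; omega
        · have := hc k; simp [dec] at this ⊢; omega
      | h+1 =>
        obtain ⟨hp, hc⟩ := ih h a (fun k => by
          have := hw (k+1); simp [List.count_cons] at this ⊢; omega)
        refine ⟨fun k => ?_, fun k => ?_⟩
        · have := hp k; simp [dec] at this ⊢; omega
        · match k with
          | 0 => simp
          | k+1 => have := hc k; simp [dec, List.count_cons] at this ⊢; omega
    · obtain ⟨hp, hc⟩ := ih (h+1) (a+1) (fun k => by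
        have := hw (k+1); simp [List.count_cons] at this ⊢; omega)
      refine ⟨fun k => ?_, fun k => ?_⟩
      · match k with
        | 0 => simp
        | k+1 => have := hp k; simp [dec, List.count_cons] at this ⊢; omega
      · match k with
        | 0 => simp
        | k+1 => have := hc k; simp [dec, List.count_cons] at this ⊢; omega

theorem enc_count {h p c} (hv : V h p c) :
    (enc h p c).count true = p.count true ∧
    (enc h p c).count false = p.count false + c.count false := by
  induction hv with
  | nil => simp
  | up _ ih => obtain ⟨i1, i2⟩ := ih; simp [List.count_cons, i1, i2]; try omega
  | cd _ ih => obtain ⟨i1, i2⟩ := ih; simp [List.count_cons, i1, i2]; try omega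
  | pd hv' ih =>
      obtain ⟨i1, i2⟩ := ih
      rcases V0_c hv' with rfl | ⟨c', rfl⟩ <;> simp [List.count_cons, i1, i2] <;> try omega

theorem enc_nonneg {h p c} (hv : V h p c) : ∀ a,
    (∀ k, (p.take k).count false ≤ (p.take k).count true + a) →
    ∀ k, ((enc h p c).take k).count false ≤ 2 * ((enc h p c).take k).count true + a + h := by
  induction hv with
  | nil => intro a _ k; simp
  | @up h p c _ ih =>
      intro a hp k
      have hp' : ∀ k, (p.take k).count false ≤ (p.take k).count true + (a+1) := by
        intro k; have := hp (k+1); simp [List.count_cons] at this; omega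
      match k with
      | 0 => simp
      | k+1 => have := ih (a+1) hp' k; simp [List.count_cons] at this ⊢; omega
  | @cd h p c _ ih =>
      intro a hp k
      match k with
      | 0 => simp
      | k+1 => have := ih a hp k; simp [List.count_cons] at this ⊢; omega
  | @pd p c hv' ih =>
      intro a hp k
      have ha : 1 ≤ a := by have := hp 1; simpa using this
      have hp' : ∀ k, (p.take k).count false ≤ (p.take k).count true + (a-1) := by
        intro k; have := hp (k+1); simp [List.count_cons] at this; omega
      rcases V0_c hv' with rfl | ⟨c', rfl⟩ <;>
      · match k with
        | 0 => simp
        | k+1 => have := ih (a-1) hp' k; simp [List.count_cons] at this ⊢; omega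


/-! ### ascent machinery -/

def leadT (p : List Bool) : ℕ := (p.takeWhile id).length

@[simp] theorem leadT_nil : leadT [] = 0 := rfl
@[simp] theorem leadT_false (p) : leadT (false :: p) = 0 := rfl
@[simp] theorem leadT_true (p) : leadT (true :: p) = leadT p + 1 := by
  simp [leadT, List.takeWhile_cons]

theorem tw_replicate (p : List Bool) : p.takeWhile id = List.replicate (leadT p) true := by
  induction p with
  | nil => rfl
  | cons b p ih =>
      cases b
      · rfl
      · simp [List.takeWhile_cons, List.replicate_succ, ih]

theorem drop_leadT (p : List Bool) : p.drop (leadT p) = p.dropWhile id := by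
  induction p with
  | nil => rfl
  | cons b p ih =>
      cases b
      · rfl
      · simpa using ih

theorem leadT_decomp (p : List Bool) :
    p = List.replicate (leadT p) true ++ p.drop (leadT p) := by
  conv_lhs => rw [← List.takeWhile_append_dropWhile (p := id) (l := p)]
  rw [tw_replicate, drop_leadT]

theorem dropWhile_shape (p : List Bool) :
    p.dropWhile id = [] ∨ ∃ q, p.dropWhile id = false :: q := by
  induction p with
  | nil => left; rfl
  | cons b p ih =>
      cases b
      · right; exact ⟨p, rfl⟩
      · simpa using ih

theorem splitOn_eq (p : List Bool) : p.splitOn false = p.splitOnP (· == false) := rfl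

theorem B_false (p : List Bool) : (false :: p).splitOn false = [] :: p.splitOn false := by
  simp [splitOn_eq, List.splitOnP_cons]

theorem B_true (p : List Bool) :
    (true :: p).splitOn false = (p.splitOn false).modifyHead (List.cons true) := by
  simp [splitOn_eq, List.splitOnP_cons]

theorem asc_nil : ascentLengths [] = [] := rfl

theorem asc_false (p : List Bool) : ascentLengths (false :: p) = ascentLengths p := by
  simp [ascentLengths, B_false]

theorem asc_struct (p : List Bool) : ascentLengths p =
    (if leadT p = 0 then [] else [leadT p]) ++ ascentLengths (p.drop (leadT p)) := by
  rcases dropWhile_shape p with hd | ⟨q, hd⟩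
  · have hp : p = List.replicate (leadT p) true := by
      conv_lhs => rw [← List.takeWhile_append_dropWhile (p := id) (l := p)]
      rw [tw_replicate, hd, List.append_nil]
    have hdrop : p.drop (leadT p) = [] := (drop_leadT p).trans hd
    rw [hdrop, asc_nil, List.append_nil]
    have hsing : p.splitOn false = [p] := by
      apply List.splitOnP_eq_single
      intro x hx
      rw [hp] at hx
      simp [List.eq_of_mem_replicate hx]
    rw [ascentLengths, hsing]
    rcases Nat.eq_zero_or_pos (leadT p) with h0 | h0
    · rw [if_pos h0]
      have : p = [] := by rw [hp, h0]; rfl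
      subst this; rfl
    · rw [if_neg (by omega)]
      have hl : p.length = leadT p := by conv_lhs => rw [hp]; simp
      simp only [List.map_cons, List.map_nil]
      rw [hl]
      simp [h0]
  · have hsplit : p.splitOn false = (p.takeWhile id) :: q.splitOn false := by
      conv_lhs => rw [← List.takeWhile_append_dropWhile (p := id) (l := p), hd]
      rw [splitOn_eq]
      refine List.splitOnP_first ?_ false (by simp) q
      intro x hx
      have := List.mem_takeWhile_imp hx
      simp at this
      simp [this]
    have hdrop : p.drop (leadT p) = false :: q := (drop_leadT p).trans hd
    rw [ascentLengths, hsplit, hdrop, asc_false]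
    have hl : (p.takeWhile id).length = leadT p := rfl
    rcases Nat.eq_zero_or_pos (leadT p) with h0 | h0
    · rw [if_pos h0]
      simp [ascentLengths, hl, h0]
    · rw [if_neg (by omega)]
      simp [ascentLengths, hl, h0]

theorem filter_pos_sum (L : List ℕ) : (L.filter (fun k => 0 < k)).sum = L.sum := by
  induction L with
  | nil => rfl
  | cons a L ih =>
      rcases Nat.eq_zero_or_pos a with h0 | h0
      · subst h0; simpa using ih
      · simp [List.filter_cons, h0, ih]

theorem B_ne_nil (p : List Bool) : p.splitOn false ≠ [] := List.splitOnP_ne_nil _ p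

theorem B_sum (p : List Bool) : ((p.splitOn false).map List.length).sum = p.count true := by
  induction p with
  | nil => rfl
  | cons b p ih =>
      cases b
      · rw [B_false]; simpa [List.count_cons] using ih
      · rw [B_true]
        obtain ⟨x, xs, hB⟩ : ∃ x xs, p.splitOn false = x :: xs := by
          cases hB : p.splitOn false with
          | nil => exact absurd hB (B_ne_nil p)
          | cons x xs => exact ⟨x, xs, rfl⟩
        rw [hB] at ih ⊢
        simp [List.count_cons] at ih ⊢
        omega

theorem asc_sum (p : List Bool) : (ascentLengths p).sum = p.count true := by
  rw [ascentLengths, filter_pos_sum, B_sum]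


/-! ### from coloured structure to V and back -/

theorem climb : ∀ (d : List Bool) (h : ℕ) (q c' : List Bool),
    (∀ k, (d.take k).count false ≤ (d.take k).count true + h) →
    (d.count false = d.count true + h) →
    V 0 q c' → V h (List.replicate (d.count true) true ++ q) (d ++ c') := by
  intro d
  induction d with
  | nil =>
      intro h q c' _ ht hv
      simp at ht
      subst ht
      simpa using hv
  | cons b d ih =>
      intro h q c' hpre ht hv
      cases b
      · have h1 : 1 ≤ h := by have := hpre 1; simpa using this
        obtain ⟨h', rfl⟩ : ∃ h', h = h' + 1 := ⟨h - 1, by omega⟩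
        have hrec := ih h' q c' (fun k => by
            have := hpre (k+1); simp [List.count_cons] at this ⊢; omega)
          (by simp [List.count_cons] at ht; omega) hv
        simpa [List.count_cons] using V.cd hrec
      · have hrec := ih (h+1) q c' (fun k => by
            have := hpre (k+1); simp [List.count_cons] at this ⊢; omega)
          (by simp [List.count_cons] at ht; omega) hv
        have := V.up hrec
        simpa [List.count_cons, List.replicate_succ] using this

theorem Kle : ∀ (N : ℕ) (p : List Bool), p.length ≤ N → ∀ (cs : List (List Bool)),
    cs.length = (ascentLengths p).length →
    (∀ q ∈ (ascentLengths p).zip cs, IsDyckWord q.2 ∧ q.2.length = 2 * q.1) →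
    V 0 p cs.flatten := by
  intro N
  induction N with
  | zero =>
      intro p hp cs hlen hz
      have : p = [] := List.eq_nil_of_length_eq_zero (by omega)
      subst this
      have : cs = [] := List.eq_nil_of_length_eq_zero (by simpa [asc_nil] using hlen)
      subst this
      exact V.nil
  | succ N ih =>
      intro p hp cs hlen hz
      match p with
      | [] =>
          have : cs = [] := List.eq_nil_of_length_eq_zero (by simpa [asc_nil] using hlen)
          subst this
          exact V.nil
      | false :: p' =>
          rw [asc_false] at hlen hz
          exact V.pd (ih p' (by simp at hp; omega) cs hlen hz)
      | true :: p' =>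
          have h0 : 0 < leadT (true :: p') := by simp
          have hasc : ascentLengths (true :: p') =
              leadT (true :: p') :: ascentLengths ((true :: p').drop (leadT (true :: p'))) := by
            have := asc_struct (true :: p')
            rwa [if_neg (by omega)] at this
          match cs with
          | [] => rw [hasc] at hlen; simp at hlen
          | d :: cs' =>
              rw [hasc] at hlen hz
              have hhead := hz (leadT (true :: p'), d) (by simp [List.zip_cons_cons])
              obtain ⟨⟨hdpre, hdcnt⟩, hdlen⟩ := hhead
              dsimp only at hdpre hdcnt hdlen
              have htr : d.count true = leadT (true :: p') := by
                have := count_tf d; omega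
              have hdrop_len : ((true :: p').drop (leadT (true :: p'))).length ≤ N := by
                simp [List.length_drop] at hp ⊢; omega
              have hrec := ih _ hdrop_len cs' (by simpa using hlen)
                (fun q hq => hz q (by simp [List.zip_cons_cons]; right; exact hq))
              have := climb d 0 _ _ (fun k => by have := hdpre k; omega) (by omega) hrec
              rw [htr] at this
              rw [List.flatten_cons]
              have hdecomp := leadT_decomp (true :: p')
              rw [← hdecomp] at this
              simpa using this


theorem Kge {h p c} (hv : V h p c) : ∃ d cs, c = d ++ cs.flatten ∧
    (∀ k, (d.take k).count false ≤ (d.take k).count true + h) ∧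
    (d.count false = d.count true + h) ∧
    d.count true = leadT p ∧
    cs.length = (ascentLengths (p.drop (leadT p))).length ∧
    (∀ q ∈ (ascentLengths (p.drop (leadT p))).zip cs, IsDyckWord q.2 ∧ q.2.length = 2 * q.1) := by
  induction hv with
  | nil => exact ⟨[], [], by simp, by simp, by simp, by simp, by simp [asc_nil], by simp [asc_nil]⟩
  | @up h p c _ ih =>
      obtain ⟨d, cs, rfl, hpre, htot, htr, hlen, hz⟩ := ih
      refine ⟨true :: d, cs, by simp, ?_, ?_, ?_, ?_, ?_⟩
      · intro k
        match k with
        | 0 => simp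
        | k+1 => have := hpre k; simp [List.count_cons]; omega
      · simp [List.count_cons]; omega
      · simp [List.count_cons, htr]
      · simpa using hlen
      · simpa using hz
  | @cd h p c _ ih =>
      obtain ⟨d, cs, rfl, hpre, htot, htr, hlen, hz⟩ := ih
      refine ⟨false :: d, cs, by simp, ?_, ?_, ?_, hlen, hz⟩
      · intro k
        match k with
        | 0 => simp
        | k+1 => have := hpre k; simp [List.count_cons]; omega
      · simp [List.count_cons]; omega
      · simpa [List.count_cons] using htr
  | @pd p c hv' ih =>
      obtain ⟨d, cs, rfl, hpre, htot, htr, hlen, hz⟩ := ih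
      rcases Nat.eq_zero_or_pos (leadT p) with h0 | h0
      · have hd : d = [] := by
          have := count_tf d
          exact List.eq_nil_of_length_eq_zero (by omega)
        subst hd
        rw [h0, List.drop_zero] at hlen hz
        refine ⟨[], cs, rfl, by simp, by simp, by simp, ?_, ?_⟩
        · simpa [asc_false] using hlen
        · simpa [asc_false] using hz
      · have hdyck : IsDyckWord d := ⟨fun k => by have := hpre k; omega, by omega⟩
        have hdl : d.length = 2 * leadT p := by have := count_tf d; omega
        have hasc : ascentLengths (false :: p) =
            leadT p :: ascentLengths (p.drop (leadT p)) := by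
          rw [asc_false]
          have := asc_struct p
          rwa [if_neg (by omega)] at this
        refine ⟨[], d :: cs, by simp, by simp, by simp, by simp, ?_, ?_⟩
        · simp only [leadT_false, List.drop_zero, hasc]
          simpa using hlen
        · simp only [leadT_false, List.drop_zero, hasc]
          intro q hq
          rw [List.zip_cons_cons, List.mem_cons] at hq
          rcases hq with rfl | hq
          · exact ⟨hdyck, hdl⟩
          · exact hz q hq

theorem Kmaster {p c} (hv : V 0 p c) : ∃ cs : List (List Bool), c = cs.flatten ∧
    cs.length = (ascentLengths p).length ∧
    (∀ q ∈ (ascentLengths p).zip cs, IsDyckWord q.2 ∧ q.2.length = 2 * q.1) := by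
  obtain ⟨d, cs, rfl, hpre, htot, htr, hlen, hz⟩ := Kge hv
  rcases Nat.eq_zero_or_pos (leadT p) with h0 | h0
  · have hd : d = [] := by
      have := count_tf d
      exact List.eq_nil_of_length_eq_zero (by omega)
    subst hd
    rw [h0, List.drop_zero] at hlen hz
    exact ⟨cs, by simp, hlen, hz⟩
  · have hdyck : IsDyckWord d := ⟨fun k => by have := hpre k; omega, by omega⟩
    have hdl : d.length = 2 * leadT p := by have := count_tf d; omega
    have hasc : ascentLengths p = leadT p :: ascentLengths (p.drop (leadT p)) := by
      have := asc_struct p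
      rwa [if_neg (by omega)] at this
    refine ⟨d :: cs, by simp, ?_, ?_⟩
    · rw [hasc]; simpa using hlen
    · rw [hasc]
      intro q hq
      rw [List.zip_cons_cons, List.mem_cons] at hq
      rcases hq with rfl | hq
      · exact ⟨hdyck, hdl⟩
      · exact hz q hq

/-! ### flatten lemmas -/

theorem join_counts : ∀ (L : List ℕ) (cs : List (List Bool)), cs.length = L.length →
    (∀ q ∈ L.zip cs, IsDyckWord q.2 ∧ q.2.length = 2 * q.1) →
    cs.flatten.count true = L.sum ∧ cs.flatten.count false = L.sum := by
  intro L
  induction L with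
  | nil => intro cs h _; rw [List.length_nil, List.length_eq_zero_iff] at h; subst h; simp
  | cons k L ih =>
      intro cs hlen hz
      match cs with
      | [] => simp at hlen
      | d :: cs' =>
          obtain ⟨⟨_, hcnt⟩, hdl⟩ := hz (k, d) (by rw [List.zip_cons_cons]; exact List.mem_cons_self)
          dsimp only at hcnt hdl
          have htf := count_tf d
          obtain ⟨i1, i2⟩ := ih cs' (by simpa using hlen)
            (fun q hq => hz q (by rw [List.zip_cons_cons]; exact List.mem_cons_of_mem _ hq))
          rw [List.flatten_cons]
          simp [List.count_append, i1, i2]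
          omega

theorem join_eq : ∀ (L : List ℕ) (cs cs' : List (List Bool)),
    cs.length = L.length → cs'.length = L.length →
    (∀ q ∈ L.zip cs, q.2.length = 2 * q.1) → (∀ q ∈ L.zip cs', q.2.length = 2 * q.1) →
    cs.flatten = cs'.flatten → cs = cs' := by
  intro L
  induction L with
  | nil =>
      intro cs cs' h h' _ _ _
      rw [List.length_nil, List.length_eq_zero_iff] at h h'
      rw [h, h']
  | cons k L ih =>
      intro cs cs' hlen hlen' hz hz' hflat
      match cs, cs' with
      | [], _ => simp at hlen
      | _, [] => simp at hlen'
      | d :: t, d' :: t' =>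
          have h1 := hz (k, d) (by rw [List.zip_cons_cons]; exact List.mem_cons_self)
          have h2 := hz' (k, d') (by rw [List.zip_cons_cons]; exact List.mem_cons_self)
          dsimp only at h1 h2
          rw [List.flatten_cons, List.flatten_cons] at hflat
          obtain ⟨hdd, htt⟩ := List.append_inj hflat (by omega)
          subst hdd
          have := ih t t' (by simpa using hlen) (by simpa using hlen')
            (fun q hq => hz q (by rw [List.zip_cons_cons]; exact List.mem_cons_of_mem _ hq))
            (fun q hq => hz' q (by rw [List.zip_cons_cons]; exact List.mem_cons_of_mem _ hq)) htt
          rw [this]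


/-! ### main bijection -/

def GoodW (n : ℕ) (w : List Bool) : Prop :=
  w.length = 3 * n ∧ w.count true = n ∧
    ∀ k, (w.take k).count false ≤ 2 * (w.take k).count true

theorem enc_good {n : ℕ} {p : List Bool} {cs : List (List Bool)}
    (hp : IsDyckWord p) (hl : p.length = 2 * n)
    (hcl : cs.length = (ascentLengths p).length)
    (hz : ∀ q ∈ (ascentLengths p).zip cs, IsDyckWord q.2 ∧ q.2.length = 2 * q.1) :
    GoodW n (enc 0 p cs.flatten) := by
  have hv : V 0 p cs.flatten := Kle p.length p le_rfl cs hcl hz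
  obtain ⟨hp1, hp2⟩ := hp
  have htf := count_tf p
  have hpt : p.count true = n := by omega
  obtain ⟨e1, e2⟩ := enc_count hv
  obtain ⟨j1, j2⟩ := join_counts _ cs hcl hz
  rw [asc_sum] at j1 j2
  refine ⟨?_, ?_, ?_⟩
  · have := count_tf (enc 0 p cs.flatten)
    omega
  · omega
  · intro k
    have := enc_nonneg hv 0 (fun k => by have := hp1 k; omega) k
    omega

theorem dec_good {n : ℕ} {w : List Bool} (hw : GoodW n w) :
    IsDyckWord (dec 0 w).1 ∧ (dec 0 w).1.length = 2 * n ∧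
      V 0 (dec 0 w).1 (dec 0 w).2 := by
  obtain ⟨hL, hT, hNN⟩ := hw
  have hF : w.count false = 2 * n := by have := count_tf w; omega
  obtain ⟨c1, c2, c3, c4⟩ := dec_count w 0
  obtain ⟨np, nc⟩ := dec_nonneg w 0 0 (fun k => by have := hNN k; omega)
  have hfullp := np (dec 0 w).1.length
  rw [List.take_length] at hfullp
  have htfp := count_tf (dec 0 w).1
  have hdh : decH 0 w = 0 := by omega
  exact ⟨⟨fun k => by have := np k; omega, by omega⟩, by omega, dec_V w 0 hdh⟩

theorem main2 (n : ℕ) :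
    Nat.card (ColouredDyck n (fun k c => IsDyckWord c ∧ c.length = 2 * k)) =
    Nat.card {w : List Bool // GoodW n w} := by
  refine Nat.card_eq_of_bijective
    (fun x => ⟨enc 0 x.1.1 x.1.2.flatten,
      enc_good x.2.1 x.2.2.1 x.2.2.2.1 x.2.2.2.2⟩) ⟨?_, ?_⟩
  · rintro ⟨⟨p, cs⟩, h⟩ ⟨⟨p', cs'⟩, h'⟩ heq
    obtain ⟨h1, h2, h3, h4⟩ := h
    obtain ⟨h1', h2', h3', h4'⟩ := h'
    rw [Subtype.mk.injEq] at heq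
    dsimp only at heq h3 h4 h3' h4' ⊢
    have hv := Kle p.length p le_rfl cs h3 h4
    have hv' := Kle p'.length p' le_rfl cs' h3' h4'
    have e1 := dec_enc hv
    have e2 := dec_enc hv'
    rw [heq, e2] at e1
    rw [Prod.mk.injEq] at e1
    obtain ⟨hpp, hcc⟩ := e1
    subst hpp
    have hcs : cs = cs' := join_eq _ cs cs' h3 h3'
      (fun q hq => (h4 q hq).2) (fun q hq => (h4' q hq).2) hcc.symm
    subst hcs
    rfl
  · rintro ⟨w, hw⟩
    obtain ⟨hdp, hdl, hv⟩ := dec_good hw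
    obtain ⟨cs, hc, hcl, hcz⟩ := Kmaster hv
    refine ⟨⟨((dec 0 w).1, cs), ⟨hdp, hdl, hcl, hcz⟩⟩, ?_⟩
    apply Subtype.ext
    show enc 0 (dec 0 w).1 cs.flatten = w
    rw [← hc]
    exact enc_dec w 0


/-! ### counting words -/

theorem count_ofFn (N : ℕ) (f : Fin N → Bool) :
    (List.ofFn f).count true = (Finset.univ.filter (fun i => f i = true)).card := by
  induction N with
  | zero => simp
  | succ N ih =>
      rw [List.ofFn_succ, Finset.card_filter, Fin.sum_univ_succ, ← Finset.card_filter, ← ih]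
      cases h : f 0 <;> simp [List.count_cons, h] <;> try omega

theorem card_words (N k : ℕ) :
    Nat.card {w : List Bool // w.length = N ∧ w.count true = k} = N.choose k := by
  have hbij : Function.Bijective
      (fun s : {s : Finset (Fin N) // s.card = k} =>
        (⟨List.ofFn (fun i => decide ((i : Fin N) ∈ s.1)),
          by simp, by rw [count_ofFn]; simpa using s.2⟩ :
          {w : List Bool // w.length = N ∧ w.count true = k})) := by
    constructor
    · rintro ⟨s, hs⟩ ⟨s', hs'⟩ h
      rw [Subtype.mk.injEq] at h
      have := List.ofFn_injective h
      apply Subtype.ext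
      ext i
      have := congrFun this i
      simpa using this
    · rintro ⟨w, hL, hk⟩
      subst hL
      refine ⟨⟨Finset.univ.filter (fun i : Fin w.length => w[(i : ℕ)] = true), ?_⟩, ?_⟩
      · have h2 := count_ofFn w.length (fun i => w[(i : ℕ)])
        rw [List.ofFn_getElem] at h2
        omega
      · apply Subtype.ext
        dsimp only
        have hfun : (fun i : Fin w.length =>
            decide ((i : Fin w.length) ∈ Finset.univ.filter
              (fun i : Fin w.length => w[(i : ℕ)] = true)))
            = fun i : Fin w.length => w[(i : ℕ)] := by
          funext i; simp
        rw [hfun]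
        exact List.ofFn_getElem
  rw [← Nat.card_eq_of_bijective _ hbij]
  rw [Nat.card_eq_fintype_card, Fintype.card_subtype]
  have huniv : Finset.univ.filter (fun s : Finset (Fin N) => s.card = k)
      = Finset.powersetCard k Finset.univ := by
    ext s; simp [Finset.mem_powersetCard_univ]
  rw [huniv, Finset.card_powersetCard, Finset.card_univ, Fintype.card_fin]


/-! ### rotations and prefix sums -/

theorem count_take_add_drop (x : Bool) (w : List Bool) (j : ℕ) :
    (w.take j).count x + (w.drop j).count x = w.count x := by
  conv_rhs => rw [← List.take_append_drop j w]
  rw [List.count_append]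

theorem take_rotate_low {w : List Bool} {j t : ℕ} (hj : j ≤ w.length)
    (ht : t ≤ w.length - j) : (w.rotate j).take t = (w.take (j + t)).drop j := by
  rw [List.rotate_eq_drop_append_take hj, List.take_append]
  have h1 : t - (w.drop j).length = 0 := by simp [List.length_drop]; omega
  rw [h1, List.take_zero, List.append_nil, List.drop_take]
  congr 1
  omega

theorem take_rotate_high {w : List Bool} {j t : ℕ} (hj : j ≤ w.length)
    (h1 : w.length - j ≤ t) (h2 : t ≤ w.length) :
    (w.rotate j).take t = w.drop j ++ w.take (t - (w.length - j)) := by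
  rw [List.rotate_eq_drop_append_take hj, List.take_append]
  rw [List.take_of_length_le (by rw [List.length_drop]; omega), List.length_drop, List.take_take]
  have hm : min (t - (w.length - j)) j = t - (w.length - j) := by omega
  rw [hm]

theorem count_rotate (x : Bool) (w : List Bool) (j : ℕ) (hj : j ≤ w.length) :
    (w.rotate j).count x = w.count x := by
  rw [List.rotate_eq_drop_append_take hj, List.count_append]
  have := count_take_add_drop x w j
  omega

/-- prefix sum of a 2-Dyck word -/
def S (w : List Bool) (t : ℕ) : ℤ :=
  2 * ((w.take t).count true : ℤ) - ((w.take t).count false : ℤ)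

theorem S_zero (w : List Bool) : S w 0 = 0 := by simp [S]

theorem S_length {n : ℕ} {w : List Bool} (hL : w.length = 3 * n + 1)
    (hT : w.count true = n) : S w w.length = -1 := by
  have := count_tf w
  rw [S, List.take_length]
  have hF : w.count false = 2 * n + 1 := by omega
  rw [hT, hF]
  push_cast
  ring

theorem S_rot_low {w : List Bool} {j t : ℕ} (hj : j ≤ w.length)
    (ht : t ≤ w.length - j) : S (w.rotate j) t = S w (j + t) - S w j := by
  have key : ∀ x : Bool, (w.take j).count x + ((w.rotate j).take t).count x
      = (w.take (j + t)).count x := by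
    intro x
    rw [take_rotate_low hj ht]
    have e1 : (w.take (j+t)).take j = w.take j := by
      rw [List.take_take]; congr 1; omega
    have := count_take_add_drop x (w.take (j+t)) j
    rw [e1] at this
    omega
  have k1 := key true
  have k2 := key false
  simp only [S]
  omega

theorem S_rot_high {w : List Bool} {j t : ℕ} (hj : j ≤ w.length)
    (h1 : w.length - j ≤ t) (h2 : t ≤ w.length) :
    S (w.rotate j) t = S w w.length - S w j + S w (t - (w.length - j)) := by
  have key : ∀ x : Bool, (w.take j).count x + ((w.rotate j).take t).count x
      = w.count x + (w.take (t - (w.length - j))).count x := by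
    intro x
    rw [take_rotate_high hj h1 h2, List.count_append]
    have := count_take_add_drop x w j
    omega
  have k1 := key true
  have k2 := key false
  simp only [S, List.take_length]
  omega


/-! ### the cycle lemma -/

def Char (w : List Bool) (j : ℕ) : Prop :=
  1 ≤ j ∧ j ≤ w.length ∧ (∀ q, j ≤ q → q ≤ w.length → S w j ≤ S w q) ∧
    ∀ i < j, S w j + 1 ≤ S w i

def GoodRot (w : List Bool) (j : ℕ) : Prop := ∀ t < w.length, 0 ≤ S (w.rotate j) t

theorem char_iff {w : List Bool} {j : ℕ} (h1 : 1 ≤ j) (h2 : j ≤ w.length)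
    (hS : S w w.length = -1) : GoodRot w j ↔ Char w j := by
  constructor
  · intro hg
    refine ⟨h1, h2, ?_, ?_⟩
    · intro q hq1 hq2
      have := hg (q - j) (by omega)
      rw [S_rot_low h2 (by omega)] at this
      have he : j + (q - j) = q := by omega
      rw [he] at this
      omega
    · intro i hi
      have := hg (i + (w.length - j)) (by omega)
      rw [S_rot_high h2 (by omega) (by omega)] at this
      have he : i + (w.length - j) - (w.length - j) = i := by omega
      rw [he, hS] at this
      omega
  · rintro ⟨_, _, hA, hB⟩
    intro t ht
    rcases le_or_gt t (w.length - j) with hc | hc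
    · rw [S_rot_low h2 hc]
      have := hA (j + t) (by omega) (by omega)
      omega
    · rw [S_rot_high h2 (by omega) (by omega), hS]
      have := hB (t - (w.length - j)) (by omega)
      omega

theorem char_unique {w : List Bool} {j j' : ℕ} (hj : Char w j) (hj' : Char w j') :
    j = j' := by
  by_contra hne
  rcases Nat.lt_or_ge j j' with h | h
  · have a1 := hj'.2.2.2 j h
    have a2 := hj.2.2.1 j' (by omega) hj'.2.1
    omega
  · have h' : j' < j := by omega
    have a1 := hj.2.2.2 j' h'
    have a2 := hj'.2.2.1 j (by omega) hj.2.1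
    omega

theorem char_exists {w : List Bool} (hS : S w w.length = -1) : ∃ j, Char w j := by
  classical
  obtain ⟨m, hm, hmin⟩ := Finset.exists_min_image (Finset.range (w.length + 1)) (S w)
    ⟨0, by simp⟩
  have hP : ∃ t, t ≤ w.length ∧ ∀ q ≤ w.length, S w t ≤ S w q :=
    ⟨m, by simp at hm; omega, fun q hq => hmin q (by simp; omega)⟩
  obtain ⟨hjle, hjmin⟩ := Nat.find_spec hP
  set j := Nat.find hP with hjdef
  have hj1 : 1 ≤ j := by
    by_contra h0
    have hj0 : j = 0 := by omega
    have h2 := hjmin w.length le_rfl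
    rw [hj0, S_zero, hS] at h2
    omega
  refine ⟨j, hj1, hjle, fun q _ hq2 => hjmin q hq2, ?_⟩
  intro i hi
  have hni := Nat.find_min hP (show i < j from hi)
  push_neg at hni
  obtain ⟨q, hq, hlt⟩ := hni (by omega)
  have := hjmin q hq
  omega


def GoodN (n : ℕ) (v : List Bool) : Prop :=
  v.length = 3 * n + 1 ∧ v.count true = n ∧ ∀ t < 3 * n + 1, 0 ≤ S v t

theorem rotback {v : List Bool} {j : ℕ} (hj : j ≤ v.length) :
    (v.rotate j).rotate (v.length - j) = v := by
  rw [List.rotate_rotate]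
  have h : j + (v.length - j) = v.length := by omega
  rw [h, List.rotate_length]

theorem good_char {n : ℕ} {w : List Bool} (hwlen : w.length = 3 * n + 1)
    (hSw : S w w.length = -1) {u : List Bool} {s : ℕ} (hs : s ≤ 3 * n)
    (hru : w.rotate s = u) (hu : GoodN n u) :
    Char w (if s = 0 then 3 * n + 1 else s) := by
  have hgrs : GoodRot w s := fun t ht => by rw [hru]; exact hu.2.2 t (by omega)
  by_cases h0 : s = 0
  · rw [if_pos h0]
    refine (char_iff (by omega) (by omega) hSw).1 ?_
    intro t ht
    rw [← hwlen, List.rotate_length]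
    have h2 := hgrs t ht
    rw [h0, List.rotate_zero] at h2
    exact h2
  · rw [if_neg h0]
    exact (char_iff (by omega) (by omega) hSw).1 hgrs

theorem card_AW (n : ℕ) :
    Nat.card {w : List Bool // w.length = 3 * n + 1 ∧ w.count true = n} =
      Nat.card {v : List Bool // GoodN n v} * (3 * n + 1) := by
  have hΨ : ∀ (x : {v : List Bool // GoodN n v} × Fin (3 * n + 1)),
      (x.1.1.rotate ((x.2 : ℕ) + 1)).length = 3 * n + 1 ∧
      (x.1.1.rotate ((x.2 : ℕ) + 1)).count true = n := by
    rintro ⟨⟨v, hv⟩, j⟩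
    have hlen : v.length = 3 * n + 1 := hv.1
    have hjlt : (j : ℕ) < 3 * n + 1 := j.isLt
    exact ⟨by rw [List.length_rotate]; exact hlen,
      by rw [count_rotate true v _ (by omega)]; exact hv.2.1⟩
  have hbij : Function.Bijective
      (fun x : {v : List Bool // GoodN n v} × Fin (3 * n + 1) =>
        (⟨x.1.1.rotate ((x.2 : ℕ) + 1), hΨ x⟩ :
          {w : List Bool // w.length = 3 * n + 1 ∧ w.count true = n})) := by
    constructor
    · rintro ⟨⟨v, hv⟩, j⟩ ⟨⟨v', hv'⟩, j'⟩ heq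
      rw [Subtype.mk.injEq] at heq
      dsimp only at heq
      have hlv : v.length = 3 * n + 1 := hv.1
      have hlv' : v'.length = 3 * n + 1 := hv'.1
      have hjlt : (j : ℕ) < 3 * n + 1 := j.isLt
      have hjlt' : (j' : ℕ) < 3 * n + 1 := j'.isLt
      set w := v.rotate ((j : ℕ) + 1) with hwdef
      have hwlen : w.length = 3 * n + 1 := by rw [hwdef, List.length_rotate]; exact hlv
      have hwT : w.count true = n := by
        rw [hwdef, count_rotate true v _ (by omega)]; exact hv.2.1
      have hSw : S w w.length = -1 := S_length hwlen hwT
      have hback : w.rotate (3 * n + 1 - ((j : ℕ) + 1)) = v := by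
        have h := rotback (v := v) (j := (j : ℕ) + 1) (by omega)
        rw [hlv] at h
        exact h
      have hback' : w.rotate (3 * n + 1 - (((j' : ℕ)) + 1)) = v' := by
        have h := rotback (v := v') (j := (j' : ℕ) + 1) (by omega)
        rw [hlv'] at h
        rw [heq]
        exact h
      have c1 := good_char hwlen hSw (by omega) hback hv
      have c2 := good_char hwlen hSw (by omega) hback' hv'
      have hJ := char_unique c1 c2
      have hjj : (j : ℕ) = (j' : ℕ) := by split_ifs at hJ <;> omega
      have hvv : v = v' := by rw [← hback, ← hback', hjj]
      exact Prod.ext (Subtype.ext hvv) (Fin.ext hjj)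
    · rintro ⟨w, hL, hT⟩
      have hSw : S w w.length = -1 := S_length hL hT
      obtain ⟨j, hj⟩ := char_exists hSw
      obtain ⟨hj1, hj2, _, _⟩ := id hj
      have hgr : GoodRot w j := (char_iff hj1 hj2 hSw).2 hj
      set s := j % (3 * n + 1) with hs
      have hslt : s < 3 * n + 1 := Nat.mod_lt _ (by omega)
      have hrot : w.rotate s = w.rotate j := by
        rw [hs, ← hL]; exact List.rotate_mod w j
      set v := w.rotate s with hv
      have hvlen : v.length = 3 * n + 1 := by rw [hv, List.length_rotate, hL]
      have hvT : v.count true = n := by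
        rw [hv, count_rotate true w s (by omega)]; exact hT
      have hvgood : GoodN n v := ⟨hvlen, hvT, by
        intro t ht
        rw [hrot]
        exact hgr t (by omega)⟩
      refine ⟨⟨⟨v, hvgood⟩, ⟨3 * n - s, by omega⟩⟩, ?_⟩
      apply Subtype.ext
      dsimp only
      rw [hv, List.rotate_rotate]
      have he : s + (3 * n - s + 1) = 3 * n + 1 := by omega
      rw [he, ← hL, List.rotate_length]
  rw [← Nat.card_eq_of_bijective _ hbij, Nat.card_prod,
    Nat.card_eq_fintype_card (α := Fin (3 * n + 1)), Fintype.card_fin]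


theorem S_nonneg_iff (w : List Bool) (t : ℕ) :
    0 ≤ S w t ↔ (w.take t).count false ≤ 2 * (w.take t).count true := by
  rw [S]; omega

theorem card_E2 (n : ℕ) :
    Nat.card {v : List Bool // GoodN n v} = Nat.card {u : List Bool // GoodW n u} := by
  symm
  have hwd : ∀ u : List Bool, GoodW n u → GoodN n (u ++ [false]) := by
    rintro u ⟨hL, hT, hNN⟩
    refine ⟨by simp [hL], by simp [List.count_append, hT], ?_⟩
    intro t ht
    have htake : (u ++ [false]).take t = u.take t := by
      rw [List.take_append]
      have : t - u.length = 0 := by omega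
      rw [this]
      simp
    rw [S_nonneg_iff, htake]
    exact hNN t
  refine Nat.card_eq_of_bijective
    (fun x : {u : List Bool // GoodW n u} => ⟨x.1 ++ [false], hwd x.1 x.2⟩) ⟨?_, ?_⟩
  · rintro ⟨u, hu⟩ ⟨u', hu'⟩ h
    rw [Subtype.mk.injEq] at h
    apply Subtype.ext
    have := congrArg List.dropLast h
    simpa [List.dropLast_concat] using this
  · rintro ⟨v, hv⟩
    obtain ⟨hL, hT, hNN⟩ := hv
    have hF : v.count false = 2 * n + 1 := by have := count_tf v; omega
    have h3n : 3 * n < v.length := by omega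
    have hdrop : v.drop (3 * n) = [v[3 * n]] := by
      rw [List.drop_eq_getElem_cons h3n, List.drop_eq_nil_of_le (by omega)]
    have hctd := count_take_add_drop true v (3 * n)
    have hcfd := count_take_add_drop false v (3 * n)
    have hb : v[3 * n] = false := by
      by_contra hbt
      have hbt' : v[3 * n] = true := by
        cases hx : v[3*n]
        · exact absurd hx hbt
        · rfl
      rw [hdrop, hbt'] at hctd hcfd
      simp at hctd hcfd
      have hSn := hNN (3 * n) (by omega)
      rw [S] at hSn
      omega
    rw [hdrop, hb] at hctd hcfd
    simp at hctd hcfd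
    have huw : GoodW n (v.take (3 * n)) := by
      refine ⟨by simp [List.length_take]; omega, by omega, ?_⟩
      intro k
      rw [List.take_take]
      have := hNN (min k (3 * n)) (by omega)
      rw [S_nonneg_iff] at this
      exact this
    refine ⟨⟨v.take (3 * n), huw⟩, ?_⟩
    apply Subtype.ext
    show v.take (3 * n) ++ [false] = v
    rw [← hb, ← hdrop]
    exact List.take_append_drop _ v

theorem card_goodW_choose (n : ℕ) :
    Nat.card {u : List Bool // GoodW n u} * (2 * n + 1) = (3 * n).choose n := by
  have h1 := card_words (3 * n + 1) n
  rw [card_AW n, card_E2 n] at h1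
  have e1 : 3 * n - n = 2 * n := by omega
  have hs1 : (3 * n).choose (2 * n) = (3 * n).choose n := by
    rw [← Nat.choose_symm (by omega : n ≤ 3 * n), e1]
  have e2 : 3 * n + 1 - n = 2 * n + 1 := by omega
  have hs2 : (3 * n + 1).choose (2 * n + 1) = (3 * n + 1).choose n := by
    rw [← Nat.choose_symm (by omega : n ≤ 3 * n + 1), e2]
  have h2 := Nat.add_one_mul_choose_eq (3 * n) (2 * n)
  -- h2 : (3n+1) * (3n).choose (2n) = (3n+1).choose (2n+1) * (2n+1)
  rw [hs1, hs2, ← h1] at h2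
  have h3 : (3 * n + 1) * ((3 * n).choose n)
      = (3 * n + 1) * (Nat.card {u : List Bool // GoodW n u} * (2 * n + 1)) := by
    rw [h2]; ring
  exact (Nat.eq_of_mul_eq_mul_left (by omega) h3).symm

end CD

/-- the number of Dyck paths of length `2n` with each `k`-ascent
coloured by a Dyck path of length `2k` is `(1/(2n+1)) * binom(3n, n)`. -/
theorem coloured_dyck_card_eq (n : ℕ) :
    (Nat.card (ColouredDyck n
        (fun k c => IsDyckWord c ∧ c.length = 2 * k)) : ℚ) =
      (1 / (2 * n + 1)) * ((3 * n).choose n : ℚ) := by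
  rw [CD.main2 n]
  have h2 := CD.card_goodW_choose n
  have hQ : ((3 * n).choose n : ℚ)
      = (Nat.card {u : List Bool // CD.GoodW n u} : ℚ) * (2 * n + 1) := by
    exact_mod_cast congrArg (Nat.cast : ℕ → ℚ) h2.symm
  rw [hQ]
  have hne : (2 * (n : ℚ) + 1) ≠ 0 := by positivity
  field_simp
end

section
/- If A(x) = sum_{i>=0} a_i x^i is the generating function of the colour counts and M(x) is the generating function for the number of Dyck paths of length 2n with each k-ascent coloured in one of a_k ways (with a_0 = 1 counting the empty path), then M satisfies the functional equation M(x) = A(x*M(x)). -/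
open Finset PowerSeries

/-- Dyck paths of semilength `n` with each `k`-ascent coloured by one of `a k`
abstract colours (represented as naturals below `a k`). -/
def NColouredDyck (n : ℕ) (a : ℕ → ℕ) : Set (List Bool × List ℕ) :=
  ColouredDyck n (fun k c => c < a k)

/-!
Read a lattice path from height `k` (`IsDyckFrom k`). Cutting such a path, for `k ≥ 1`, at its
first step down to height `k - 1` splits it uniquely into a Dyck path, a down step and a path from
height `k - 1`; the ascents, and with them the colourings, split accordingly. Hence the coloured
paths from height `k` with `m` up-steps are counted by the coefficient of `x^m` in `M^(k+1)`. A
nonempty coloured Dyck path is `U^(k+1) D Q`, with a colour for its first ascent and a coloured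
path `Q` from height `k`, so `M = 1 + ∑ₖ a_(k+1) x^(k+1) M^(k+1) = A(xM)`.
-/

theorem List.exists_eq_append_of_forall₂_append {α β : Type*} {R : α → β → Prop}
    {l₁ l₂ : List α} {u : List β} (h : List.Forall₂ R (l₁ ++ l₂) u) :
    ∃ u₁ u₂, u = u₁ ++ u₂ ∧ List.Forall₂ R l₁ u₁ ∧ List.Forall₂ R l₂ u₂ :=
  ⟨u.take l₁.length, u.drop l₁.length, (List.take_append_drop _ _).symm,
    by simpa using List.forall₂_take l₁.length h, by simpa using List.forall₂_drop l₁.length h⟩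

theorem List.finite_setOf_forall₂ {α β : Type*} {R : α → β → Prop}
    (hR : ∀ a, {b | R a b}.Finite) (l : List α) : {u | List.Forall₂ R l u}.Finite := by
  induction l with
  | nil => simp
  | cons a l ih =>
    refine ((hR a).image2 List.cons ih).subset ?_
    intro u hu
    obtain ⟨b, u', hb, hu', rfl⟩ := List.forall₂_cons_left_iff.1 hu
    exact ⟨b, hb, u', hu', rfl⟩

theorem Nat.card_eq_sum_of_bijective {ι γ : Type*} (s : Finset ι) {β : ι → Type*}
    [∀ i, Finite (β i)] {f : (Σ i : s, β i) → γ} (hf : Function.Bijective f) :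
    Nat.card γ = ∑ i ∈ s, Nat.card (β i) := by
  rw [← Nat.card_eq_of_bijective f hf, Nat.card_sigma,
    Finset.sum_coe_sort s fun i => Nat.card (β i)]

theorem List.eq_replicate_true_or_eq_replicate_true_append_false_cons (p : List Bool) :
    (∃ k, p = List.replicate k true) ∨ ∃ k q, p = List.replicate k true ++ false :: q := by
  induction p with
  | nil => exact .inl ⟨0, rfl⟩
  | cons b p ih =>
    cases b
    · exact .inr ⟨0, p, rfl⟩
    · rcases ih with ⟨k, rfl⟩ | ⟨k, q, rfl⟩
      exacts [.inl ⟨k + 1, rfl⟩, .inr ⟨k + 1, q, rfl⟩]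

theorem List.replicate_true_append_false_cons_inj {k k' : ℕ} {q q' : List Bool}
    (h : List.replicate k true ++ false :: q = List.replicate k' true ++ false :: q') :
    k = k' ∧ q = q' := by
  induction k generalizing k' with
  | zero => cases k' <;> simp_all [List.replicate_succ]
  | succ k ih =>
    cases k' with
    | zero => simp [List.replicate_succ] at h
    | succ k' => simpa using ih (by simpa [List.replicate_succ] using h)

def IsDyckFrom : ℕ → List Bool → Prop
  | k, [] => k = 0
  | k, true :: q => IsDyckFrom (k + 1) q
  | 0, false :: _ => False
  | k + 1, false :: q => IsDyckFrom k q

namespace IsDyckFrom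

theorem iff_count_take {k : ℕ} {q : List Bool} :
    IsDyckFrom k q ↔ (∀ m, (q.take m).count false ≤ (q.take m).count true + k) ∧
      q.count false = q.count true + k := by
  induction q generalizing k with
  | nil => simp [IsDyckFrom, eq_comm]
  | cons b q ih =>
    have forall_take {P : List Bool → Prop} :
        (∀ m, P ((b :: q).take m)) ↔ P [] ∧ ∀ m, P (b :: q.take m) :=
      ⟨fun h => ⟨h 0, fun m => h (m + 1)⟩, fun h m => by cases m; exacts [h.1, h.2 _]⟩
    rw [forall_take (P := fun l => l.count false ≤ l.count true + k)]
    cases b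
    · cases k with
      | zero => exact iff_of_false id fun h => absurd (h.1.2 0) (by simp)
      | succ k => simp [IsDyckFrom, ih, ← add_assoc]
    · simp [IsDyckFrom, ih, add_right_comm _ 1, ← add_assoc]

theorem length_eq {k : ℕ} {q : List Bool} (h : IsDyckFrom k q) :
    q.length = 2 * q.count true + k := by
  have := (iff_count_take.1 h).2
  have := List.count_true_add_count_false q
  omega

theorem append {j k : ℕ} {P Q : List Bool} (hP : IsDyckFrom j P) (hQ : IsDyckFrom k Q) :
    IsDyckFrom (j + k) (P ++ Q) := by
  induction P generalizing j with
  | nil => simp_all [IsDyckFrom]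
  | cons b P ih =>
    match b, j, hP with
    | true, j, hP => simpa [IsDyckFrom, add_right_comm] using ih hP
    | false, j + 1, hP => simpa [IsDyckFrom, add_right_comm] using ih hP

theorem exists_eq_append_false_cons {j : ℕ} {q : List Bool} (h : IsDyckFrom (j + 1) q) :
    ∃ P r, q = P ++ false :: r ∧ IsDyckFrom 0 P ∧ IsDyckFrom j r := by
  suffices ∀ d, IsDyckFrom (d + j + 1) q →
      ∃ P r, q = P ++ false :: r ∧ IsDyckFrom d P ∧ IsDyckFrom j r by
    simpa using this 0 (by simpa using h)
  clear h
  induction q with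
  | nil => simp [IsDyckFrom]
  | cons b q ih =>
    rintro d h
    match b, d with
    | true, d =>
      obtain ⟨P, r, rfl, hP, hr⟩ := ih (d + 1) (by simpa [IsDyckFrom, add_right_comm] using h)
      exact ⟨true :: P, r, rfl, hP, hr⟩
    | false, 0 => exact ⟨[], q, rfl, rfl, by simpa [IsDyckFrom] using h⟩
    | false, d + 1 =>
      obtain ⟨P, r, rfl, hP, hr⟩ := ih d (by simpa [IsDyckFrom, add_right_comm] using h)
      exact ⟨false :: P, r, rfl, hP, hr⟩

theorem append_false_cons_inj {P P' r r' : List Bool} (hP : IsDyckFrom 0 P)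
    (hP' : IsDyckFrom 0 P') (h : P ++ false :: r = P' ++ false :: r') : P = P' ∧ r = r' := by
  suffices ∀ d Q, IsDyckFrom d P → IsDyckFrom d Q → P ++ false :: r = Q ++ false :: r' →
      P = Q by
    obtain rfl := this 0 P' hP hP' h
    exact ⟨rfl, by simpa using h⟩
  clear hP hP' h P'
  induction P with
  | nil =>
    rintro d (_ | ⟨b, P'⟩) hP hP' h
    · rfl
    · obtain rfl : d = 0 := hP
      obtain rfl : b = false := (List.cons_eq_cons.1 h).1.symm
      exact absurd hP' id
  | cons b P ih =>
    rintro d (_ | ⟨b', P'⟩) hP hP' h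
    · obtain rfl : d = 0 := hP'
      obtain rfl : b = false := (List.cons_eq_cons.1 h).1
      exact absurd hP id
    · obtain ⟨rfl, htail⟩ := List.cons_eq_cons.1 h
      match b, d with
      | true, d => rw [ih (d + 1) P' hP hP' htail]
      | false, d + 1 => rw [ih d P' hP hP' htail]

theorem replicate_true_append_iff {k n : ℕ} {q : List Bool} :
    IsDyckFrom k (List.replicate n true ++ q) ↔ IsDyckFrom (k + n) q := by
  induction n generalizing k with
  | zero => rfl
  | succ n ih => simp [List.replicate_succ, IsDyckFrom, ih, add_right_comm, add_assoc]

end IsDyckFrom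

theorem isDyckWord_iff_isDyckFrom_zero {p : List Bool} : IsDyckWord p ↔ IsDyckFrom 0 p := by
  simp [IsDyckWord, IsDyckFrom.iff_count_take, eq_comm]

theorem ascentLengths_append_false_cons (P r : List Bool) :
    ascentLengths (P ++ false :: r) = ascentLengths P ++ ascentLengths r := by
  simp [ascentLengths, List.splitOn_append_cons_self]

theorem ascentLengths_replicate_true_append_false_cons {k : ℕ} (hk : k ≠ 0) (r : List Bool) :
    ascentLengths (List.replicate k true ++ false :: r) = k :: ascentLengths r := by
  simp [ascentLengths, List.splitOn_append_cons_self_of_not_mem, Nat.pos_of_ne_zero hk]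

theorem IsDyckFrom.exists_eq_replicate_true_append_false_cons {p : List Bool}
    (hp : IsDyckFrom 0 p) (hne : p ≠ []) :
    ∃ k q, p = List.replicate (k + 1) true ++ false :: q ∧ IsDyckFrom k q := by
  rcases p.eq_replicate_true_or_eq_replicate_true_append_false_cons with ⟨k, rfl⟩ | ⟨k, q, rfl⟩
  · have := IsDyckFrom.replicate_true_append_iff (k := 0) (n := k) (q := [])
    rw [List.append_nil] at this
    obtain rfl : k = 0 := by simpa [IsDyckFrom] using this.1 hp
    exact absurd rfl hne
  · rw [IsDyckFrom.replicate_true_append_iff, zero_add] at hp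
    cases k with
    | zero => exact absurd hp id
    | succ k => exact ⟨k, q, rfl, hp⟩

section Coloured

variable {α : Type*}

def ColouredDyckFrom (k m : ℕ) (L : ℕ → α → Prop) : Set (List Bool × List α) :=
  {pc | IsDyckFrom k pc.1 ∧ pc.1.count true = m ∧ List.Forall₂ L (ascentLengths pc.1) pc.2}

variable {L : ℕ → α → Prop}

theorem colouredDyck_eq_colouredDyckFrom_zero (n : ℕ) (L : ℕ → α → Prop) :
    ColouredDyck n L = ColouredDyckFrom 0 n L := by
  ext ⟨p, cs⟩
  simp only [ColouredDyck, ColouredDyckFrom, Set.mem_ofPred_eq, isDyckWord_iff_isDyckFrom_zero,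
    List.forall₂_iff_zip]
  refine and_congr_right fun hp => ?_
  rw [hp.length_eq, add_zero, Nat.mul_left_cancel_iff two_pos, eq_comm (a := cs.length)]
  simp only [Prod.forall]

theorem finite_colouredDyckFrom (hL : ∀ k, {c | L k c}.Finite) (k m : ℕ) :
    (ColouredDyckFrom k m L).Finite := by
  refine ((List.finite_length_eq Bool (2 * m + k)).biUnion fun p _ =>
    ((List.finite_setOf_forall₂ hL (ascentLengths p)).image (Prod.mk p))).subset ?_
  rintro ⟨p, cs⟩ ⟨hp, hm, hcs⟩
  simp only [Set.mem_iUnion, Set.mem_image, Set.mem_ofPred_eq, Prod.mk.injEq]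
  exact ⟨p, by rw [hp.length_eq, hm], cs, hcs, rfl, rfl⟩

theorem colouredDyckFrom_zero_zero : ColouredDyckFrom 0 0 L = {([], [])} := by
  ext ⟨p, cs⟩
  constructor
  · rintro ⟨hp, hm, hcs⟩
    obtain rfl : p = [] := List.eq_nil_of_length_eq_zero (by rw [hp.length_eq, hm])
    obtain rfl : cs = [] := by simpa [ascentLengths] using hcs
    rfl
  · rintro ⟨⟩
    exact ⟨rfl, rfl, .nil⟩

theorem append_false_cons_mem_colouredDyckFrom {k p q : ℕ} {P r : List Bool} {cs ds : List α}
    (hP : (P, cs) ∈ ColouredDyckFrom 0 p L) (hr : (r, ds) ∈ ColouredDyckFrom k q L) :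
    (P ++ false :: r, cs ++ ds) ∈ ColouredDyckFrom (k + 1) (p + q) L := by
  obtain ⟨hP, rfl, hcs⟩ := hP
  obtain ⟨hr, rfl, hds⟩ := hr
  refine ⟨by simpa using hP.append (k := k + 1) (Q := false :: r) hr, by simp, ?_⟩
  rw [ascentLengths_append_false_cons]
  exact List.rel_append hcs hds

theorem replicate_true_append_false_cons_mem_colouredDyckFrom {k m : ℕ} {q : List Bool}
    {c : α} {cs : List α} (hc : L (k + 1) c) (hq : (q, cs) ∈ ColouredDyckFrom k m L) :
    (List.replicate (k + 1) true ++ false :: q, c :: cs) ∈ ColouredDyckFrom 0 (k + 1 + m) L := by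
  obtain ⟨hq, rfl, hcs⟩ := hq
  refine ⟨by simpa [IsDyckFrom.replicate_true_append_iff, IsDyckFrom] using hq, by simp, ?_⟩
  rw [ascentLengths_replicate_true_append_false_cons k.succ_ne_zero]
  exact .cons hc hcs

theorem card_colouredDyckFrom_succ (hL : ∀ k, {c | L k c}.Finite) (k m : ℕ) :
    Nat.card (ColouredDyckFrom (k + 1) m L) = ∑ x ∈ antidiagonal m,
      Nat.card (ColouredDyckFrom 0 x.1 L) * Nat.card (ColouredDyckFrom k x.2 L) := by
  have := fun k m => (finite_colouredDyckFrom hL k m).to_subtype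
  let f : (Σ x : antidiagonal m, ColouredDyckFrom 0 x.1.1 L × ColouredDyckFrom k x.1.2 L) →
      ColouredDyckFrom (k + 1) m L := fun ⟨x, P, r⟩ =>
    ⟨(P.1.1 ++ false :: r.1.1, P.1.2 ++ r.1.2), by
      simpa [HasAntidiagonal.mem_antidiagonal.1 x.2] using
        append_false_cons_mem_colouredDyckFrom P.2 r.2⟩
  simp_rw [← Nat.card_prod]
  refine Nat.card_eq_sum_of_bijective _
    (β := fun x : ℕ × ℕ => ColouredDyckFrom 0 x.1 L × ColouredDyckFrom k x.2 L) (f := f) ⟨?_, ?_⟩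
  · rintro ⟨⟨⟨p, q⟩, hx⟩, ⟨⟨P, cs⟩, hP⟩, ⟨⟨r, ds⟩, hr⟩⟩
      ⟨⟨⟨p', q'⟩, hx'⟩, ⟨⟨P', cs'⟩, hP'⟩, ⟨⟨r', ds'⟩, hr'⟩⟩ h
    simp only [f, Subtype.mk.injEq, Prod.mk.injEq] at h
    obtain ⟨rfl, rfl⟩ := hP.1.append_false_cons_inj hP'.1 h.1
    obtain ⟨rfl, rfl⟩ := List.append_inj h.2 (hP.2.2.length_eq.symm.trans hP'.2.2.length_eq)
    obtain rfl : p = p' := hP.2.1.symm.trans hP'.2.1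
    obtain rfl : q = q' := by rw [HasAntidiagonal.mem_antidiagonal] at hx hx'; omega
    rfl
  · rintro ⟨⟨w, cs⟩, hw, hm, hcs⟩
    obtain ⟨P, r, rfl, hP, hr⟩ := hw.exists_eq_append_false_cons
    rw [ascentLengths_append_false_cons] at hcs
    obtain ⟨cs₁, cs₂, rfl, h₁, h₂⟩ := List.exists_eq_append_of_forall₂_append hcs
    exact ⟨⟨⟨(P.count true, r.count true), by simp [HasAntidiagonal.mem_antidiagonal, ← hm]⟩,
      ⟨(P, cs₁), hP, rfl, h₁⟩, ⟨(r, cs₂), hr, rfl, h₂⟩⟩, rfl⟩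

theorem card_colouredDyckFrom_zero_of_ne_zero (hL : ∀ k, {c | L k c}.Finite) {n : ℕ}
    (hn : n ≠ 0) : Nat.card (ColouredDyckFrom 0 n L) = ∑ k ∈ range n,
      Nat.card {c // L (k + 1) c} * Nat.card (ColouredDyckFrom k (n - (k + 1)) L) := by
  have := fun k m => (finite_colouredDyckFrom hL k m).to_subtype
  have : ∀ k, Finite {c // L k c} := fun k => (hL k).to_subtype
  let f : (Σ k : range n, {c // L (k.1 + 1) c} × ColouredDyckFrom k.1 (n - (k.1 + 1)) L) →
      ColouredDyckFrom 0 n L := fun ⟨k, c, q⟩ =>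
    ⟨(List.replicate (k.1 + 1) true ++ false :: q.1.1, c.1 :: q.1.2), by
      have hk := mem_range.1 k.2
      simpa [show k.1 + 1 + (n - (k.1 + 1)) = n by omega] using
        replicate_true_append_false_cons_mem_colouredDyckFrom c.2 q.2⟩
  simp_rw [← Nat.card_prod]
  refine Nat.card_eq_sum_of_bijective _ (β := fun k : ℕ =>
    {c // L (k + 1) c} × ColouredDyckFrom k (n - (k + 1)) L) (f := f) ⟨?_, ?_⟩
  · rintro ⟨⟨k, hk⟩, ⟨c, hc⟩, ⟨⟨q, cs⟩, hq⟩⟩ ⟨⟨k', hk'⟩, ⟨c', hc'⟩, ⟨⟨q', cs'⟩, hq'⟩⟩ h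
    simp only [f, Subtype.mk.injEq, Prod.mk.injEq, List.cons.injEq] at h
    obtain ⟨hkk, rfl⟩ := List.replicate_true_append_false_cons_inj h.1
    obtain rfl : k = k' := by omega
    obtain ⟨rfl, rfl⟩ := h.2
    rfl
  · rintro ⟨⟨p, cs⟩, hp, hm, hcs⟩
    obtain ⟨k, q, rfl, hq⟩ := hp.exists_eq_replicate_true_append_false_cons
      (by rintro rfl; exact hn hm.symm)
    rw [ascentLengths_replicate_true_append_false_cons k.succ_ne_zero] at hcs
    obtain ⟨c, ds, hc, hds, rfl⟩ := List.forall₂_cons_left_iff.1 hcs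
    replace hm : k + 1 + q.count true = n := by simpa using hm
    exact ⟨⟨⟨k, mem_range.2 (by omega)⟩, ⟨c, hc⟩, ⟨(q, ds), hq, by dsimp only; omega, hds⟩⟩, rfl⟩

end Coloured

section Series

variable {α : Type*} {L : ℕ → α → Prop} (R : Type*) [CommSemiring R]

noncomputable def colouredDyckSeries (L : ℕ → α → Prop) : PowerSeries R :=
  PowerSeries.mk fun n => (Nat.card (ColouredDyck n L) : R)

theorem coeff_colouredDyckSeries (n : ℕ) :
    coeff n (colouredDyckSeries R L) = Nat.card (ColouredDyckFrom 0 n L) := by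
  rw [colouredDyckSeries, coeff_mk, colouredDyck_eq_colouredDyckFrom_zero]

theorem coeff_colouredDyckSeries_pow_succ (hL : ∀ k, {c | L k c}.Finite) (k m : ℕ) :
    coeff m (colouredDyckSeries R L ^ (k + 1)) = Nat.card (ColouredDyckFrom k m L) := by
  induction k generalizing m with
  | zero => rw [zero_add, pow_one, coeff_colouredDyckSeries]
  | succ k ih =>
    rw [pow_succ', coeff_mul, card_colouredDyckFrom_succ hL, Nat.cast_sum]
    refine sum_congr rfl fun x _ => ?_
    rw [coeff_colouredDyckSeries, ih, Nat.cast_mul]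

theorem coeff_colouredDyckSeries_eq_coeff_sum (hL : ∀ k, {c | L k c}.Finite)
    (h0 : Nat.card {c // L 0 c} = 1) (n : ℕ) :
    coeff n (colouredDyckSeries R L) = coeff n (∑ i ∈ range (n + 1),
      (Nat.card {c // L i c} : R) • (X * colouredDyckSeries R L) ^ i) := by
  have coeff_term (k : ℕ) (hk : k ∈ range n) :
      coeff n ((Nat.card {c // L (k + 1) c} : R) • (X * colouredDyckSeries R L) ^ (k + 1)) =
        (Nat.card {c // L (k + 1) c} : R) * Nat.card (ColouredDyckFrom k (n - (k + 1)) L) := by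
    rw [coeff_smul, mul_pow, coeff_X_pow_mul', if_pos (Nat.succ_le_of_lt (mem_range.1 hk)),
      coeff_colouredDyckSeries_pow_succ R hL, smul_eq_mul]
  rw [map_sum, sum_range_succ', sum_congr rfl coeff_term, pow_zero, h0, Nat.cast_one, one_smul,
    coeff_one, coeff_colouredDyckSeries]
  rcases eq_or_ne n 0 with rfl | hn
  · simp [colouredDyckFrom_zero_zero]
  · rw [card_colouredDyckFrom_zero_of_ne_zero hL hn, if_neg hn, add_zero]
    norm_cast

end Series

/-- with `A(x) = ∑ aᵢ xⁱ` and `M(x)` the generating function of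
coloured Dyck paths, `M(x) = A(x·M(x))` (stated coefficientwise; the terms with
`i > n` contribute nothing to the `n`-th coefficient since `X*M` has positive
order). -/
theorem coloured_dyck_gf_functional_equation (a : ℕ → ℕ) (ha : a 0 = 1) :
    ∀ n : ℕ,
      (PowerSeries.coeff (R := ℚ) n) (PowerSeries.mk fun j => (Nat.card (NColouredDyck j a) : ℚ)) =
        (PowerSeries.coeff (R := ℚ) n) (∑ i ∈ Finset.range (n + 1),
          (a i : ℚ) • ((PowerSeries.X *
            PowerSeries.mk fun j => (Nat.card (NColouredDyck j a) : ℚ)) ^ i)) := by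
  intro n
  have card_colours (k : ℕ) : Nat.card {c // c < a k} = a k := by
    rw [← Nat.card_congr Fin.equivSubtype, Nat.card_fin]
  have := coeff_colouredDyckSeries_eq_coeff_sum ℚ (L := fun k c => c < a k)
    (fun k => Set.finite_Iio (a k)) (by rw [card_colours, ha]) n
  simp only [card_colours] at this
  exact this
end

section
/- The formal power series M satisfying M - 1 = x*M^3 with M(0)=1 has coefficients [x^n]M = (1/(2n+1))*binomial(3n,n) for n >= 1. -/
/-!
Differentiating `M = 1 + X M³` and multiplying by `X M` gives, for the Euler operator
`θ = X d/dX`, the identity `M θM = (M - 1) M + 3 (M - 1) θM`. Multiplied by powers of `M`, and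
using `θ(Mʳ⁺¹) = (r + 1) Mʳ θM` and `[xⁿ] θf = n [xⁿ] f`, it becomes the relation
`(r + 1)(3n + r) [xⁿ] Mʳ = r (2n + r + 1) [xⁿ] Mʳ⁺¹` between consecutive powers. Chaining `r = 1, 2`
with `[xⁿ⁺¹] M = [xⁿ] M³` yields a first-order recurrence for `[xⁿ] M`, which
`binom(3n, n) / (2n + 1)` also satisfies.
-/

open PowerSeries

theorem Nat.two_mul_succ_mul_choose_three_mul_succ (n : ℕ) :
    2 * (n + 1) * (2 * n + 1) * (3 * (n + 1)).choose (n + 1) =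
      3 * (3 * n + 1) * (3 * n + 2) * (3 * n).choose n := by
  have h1 := Nat.add_one_mul_choose_eq (3 * n) n
  have h2 := Nat.choose_mul_succ_eq (3 * n + 1) (n + 1)
  have h3 := Nat.choose_mul_succ_eq (3 * n + 2) (n + 1)
  rw [show 3 * n + 1 + 1 = 3 * n + 2 by ring, show 3 * n + 2 - (n + 1) = 2 * n + 1 by omega] at h2
  rw [show 3 * n + 2 + 1 = 3 * (n + 1) by ring, show 3 * (n + 1) - (n + 1) = 2 * (n + 1) by omega]
    at h3
  linear_combination (2 * n + 1) * h3.symm + 3 * (n + 1) * h2.symm + 3 * (3 * n + 2) * h1.symm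

namespace PowerSeries

section CommRing

variable {R : Type*} [CommRing R]

theorem coeff_X_mul_derivative (f : R⟦X⟧) (n : ℕ) :
    coeff n (X * d⁄dX R f) = n * coeff n f := by
  cases n with
  | zero => simp
  | succ n => rw [coeff_succ_X_mul, coeff_derivative]; push_cast; ring

theorem derivative_pow_succ (f : R⟦X⟧) (n : ℕ) :
    d⁄dX R (f ^ (n + 1)) = (n + 1 : R⟦X⟧) * f ^ n * d⁄dX R f := by
  rw [derivative_pow]; push_cast; simp

theorem mul_derivative_pow (f : R⟦X⟧) (n : ℕ) :
    f * d⁄dX R (f ^ n) = n * f ^ n * d⁄dX R f := by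
  cases n with
  | zero => simp
  | succ n => rw [derivative_pow_succ]; push_cast; ring

variable {k : ℕ} {M : R⟦X⟧}

theorem coeff_succ_of_eq_one_add_X_mul_pow (hM : M = 1 + X * M ^ k) (n : ℕ) :
    coeff (n + 1) M = coeff n (M ^ k) := by
  conv_lhs => rw [hM]
  simp [coeff_succ_X_mul]

theorem mul_X_mul_derivative_of_eq_one_add_X_mul_pow (hM : M = 1 + X * M ^ k) :
    M * (X * d⁄dX R M) = (M - 1) * M + (k : R⟦X⟧) * ((M - 1) * (X * d⁄dX R M)) := by
  have hd : d⁄dX R M = M ^ k + X * d⁄dX R (M ^ k) := by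
    conv_lhs => rw [hM]
    rw [map_add, derivative_one, Derivation.leibniz, derivative_X, smul_eq_mul, smul_eq_mul]
    ring
  have hXM : X * M ^ k = M - 1 := by linear_combination -hM
  linear_combination (X * M) * hd + X ^ 2 * mul_derivative_pow M k +
    (M + (k : R⟦X⟧) * (X * d⁄dX R M)) * hXM

theorem coeff_pow_recurrence_of_eq_one_add_X_mul_pow (hM : M = 1 + X * M ^ k) (r n : ℕ) :
    ((r : R) + 2) * (k * n + r + 1) * coeff n (M ^ (r + 1)) =
      ((r : R) + 1) * (k * n - n + r + 2) * coeff n (M ^ (r + 2)) := by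
  have hθ : (r + 1) • (X * d⁄dX R (M ^ (r + 2))) =
      ((r + 1) * (r + 2)) • (M ^ (r + 2) - M ^ (r + 1)) +
        (k * (r + 1)) • (X * d⁄dX R (M ^ (r + 2))) - (k * (r + 2)) • (X * d⁄dX R (M ^ (r + 1))) := by
    simp only [nsmul_eq_mul, derivative_pow_succ]
    push_cast
    linear_combination (((r : R⟦X⟧) + 1) * ((r : R⟦X⟧) + 2) * M ^ r) *
      mul_X_mul_derivative_of_eq_one_add_X_mul_pow hM
  have hcoeff := congrArg (coeff n) hθ
  simp only [map_add, map_sub, map_nsmul, coeff_X_mul_derivative] at hcoeff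
  simp only [nsmul_eq_mul] at hcoeff
  push_cast at hcoeff
  linear_combination hcoeff

end CommRing

section Field

variable {K : Type*} [Field K] [CharZero K] {M : K⟦X⟧}

theorem coeff_succ_recurrence_of_eq_one_add_X_mul_cube (hM : M = 1 + X * M ^ 3) (n : ℕ) :
    2 * (n + 1) * (2 * n + 3) * coeff (n + 1) M = 3 * (3 * n + 1) * (3 * n + 2) * coeff n M := by
  have h12 := coeff_pow_recurrence_of_eq_one_add_X_mul_pow hM 0 n
  have h23 := coeff_pow_recurrence_of_eq_one_add_X_mul_pow hM 1 n
  rw [coeff_succ_of_eq_one_add_X_mul_pow hM]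
  simp only [zero_add, pow_one] at h12
  push_cast at h12 h23
  linear_combination -(n + 1 : K) * h23 - (3 * (3 * n + 2) / 2 : K) * h12

theorem two_mul_add_one_mul_coeff_of_eq_one_add_X_mul_cube (hM : M = 1 + X * M ^ 3) (n : ℕ) :
    (2 * n + 1) * coeff n M = (3 * n).choose n := by
  induction n with
  | zero => rw [hM]; simp
  | succ n ih =>
    have hchoose : (2 * (n + 1) * (2 * n + 1) * (3 * (n + 1)).choose (n + 1) : K) =
        3 * (3 * n + 1) * (3 * n + 2) * (3 * n).choose n := by
      exact_mod_cast Nat.two_mul_succ_mul_choose_three_mul_succ n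
    have hne : (2 * (n + 1) * (2 * n + 1) : K) ≠ 0 := by
      exact_mod_cast (by positivity : 2 * (n + 1) * (2 * n + 1) ≠ 0)
    apply mul_left_cancel₀ hne
    push_cast
    linear_combination (2 * n + 1 : K) * coeff_succ_recurrence_of_eq_one_add_X_mul_cube hM n +
      (3 * (3 * n + 1) * (3 * n + 2) : K) * ih - hchoose

end Field

end PowerSeries

theorem coeff_of_cubic_functional_equation_general (M : PowerSeries ℚ)
    (h : M - 1 = PowerSeries.X * M ^ 3) :
    ∀ n : ℕ, 1 ≤ n →
      PowerSeries.coeff n M = (1 / (2 * n + 1)) * ((3 * n).choose n : ℚ) := by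
  intro n _
  rw [← two_mul_add_one_mul_coeff_of_eq_one_add_X_mul_cube (eq_add_of_sub_eq' h) n]
  field_simp

/-- the formal power series `M` with `M(0) = 1` satisfying
`M - 1 = x M³` has coefficients `[xⁿ]M = (1/(2n+1)) * binom(3n, n)` for `n ≥ 1`. -/
theorem coeff_of_cubic_functional_equation (M : PowerSeries ℚ)
    (h0 : PowerSeries.constantCoeff M = 1)
    (h : M - 1 = PowerSeries.X * M ^ 3) :
    ∀ n : ℕ, 1 ≤ n →
      PowerSeries.coeff n M = (1 / (2 * n + 1)) * ((3 * n).choose n : ℚ) :=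
  coeff_of_cubic_functional_equation_general M h
end

section
/- There is a bijection between Dyck paths of length 2n and non-crossing out-trees on n+1 vertices; consequently the number of non-crossing trees on [n+1] in which every vertex other than the root 1 has in-degree exactly 1 equals the Catalan number C_n. -/
open Finset PowerSeries

/-- A non-crossing tree on vertices `0, 1, …, N-1` placed clockwise on a circle:
a tree whose edges, as chords, are pairwise non-crossing, i.e. there is no
alternating pattern `a < c < b < d` with `ab` and `cd` edges. -/
def IsNCTree {N : ℕ} (G : SimpleGraph (Fin N)) : Prop :=
  G.IsTree ∧ ∀ a b c d : Fin N, G.Adj a b → G.Adj c d →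
    ¬(a < c ∧ c < b ∧ b < d)

/-- A non-crossing out-tree: a non-crossing tree in which every vertex other
than the root `0` has exactly one in-edge (edge coming from a smaller vertex). -/
def IsNCOTree {N : ℕ} (G : SimpleGraph (Fin N)) : Prop :=
  IsNCTree G ∧ ∀ v : Fin N, v.val ≠ 0 → ∃! a : Fin N, a < v ∧ G.Adj a v

/-! A graph on `0, …, n` in which every nonzero vertex has exactly one smaller neighbour (its
parent) is automatically a tree: following parents connects everything to `0`, and there are
exactly `n` edges. So NCO-trees are the same as parent sequences whose edges `{p v, v}` do not
cross. These satisfy the Catalan recursion: if `k + 1` is the last child of the root, the tree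
splits into independent NCO-trees on `0, …, k` and on `k + 1, …, n + 1`. Dyck words of
semilength `n` are counted by `catalan n` as well, so the two sets are in bijection. -/

namespace SimpleGraph

variable {V : Type*} [LinearOrder V] [OrderBot V] {G H : SimpleGraph V}

theorem reachable_bot_of_exists_lt_adj [WellFoundedLT V]
    (h : ∀ v, v ≠ ⊥ → ∃ a < v, G.Adj a v) (v : V) : G.Reachable v ⊥ := by
  induction v using WellFoundedLT.induction with
  | _ v ih =>
    by_cases hv : v = ⊥
    · exact hv ▸ Reachable.refl _
    · obtain ⟨a, hav, hadj⟩ := h v hv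
      exact hadj.symm.reachable.trans (ih a hav)

theorem connected_of_exists_lt_adj [WellFoundedLT V]
    (h : ∀ v, v ≠ ⊥ → ∃ a < v, G.Adj a v) : G.Connected :=
  (connected_iff _).2 ⟨fun u v => (reachable_bot_of_exists_lt_adj h u).trans
    (reachable_bot_of_exists_lt_adj h v).symm, ⟨⊥⟩⟩

/-- Each edge is recorded once, at its larger endpoint. -/
theorem card_edgeSet_add_one_of_existsUnique_lt_adj [Finite V]
    (h : ∀ v, v ≠ ⊥ → ∃! a, a < v ∧ G.Adj a v) :
    Nat.card G.edgeSet + 1 = Nat.card V := by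
  choose p hp huniq using h
  let f : {v : V // v ≠ ⊥} → G.edgeSet := fun v => ⟨s(p v v.2, v), (hp v v.2).2⟩
  have hf : Function.Bijective f := by
    constructor
    · rintro ⟨v, hv⟩ ⟨w, hw⟩ hvw
      rcases Sym2.eq_iff.1 (congrArg Subtype.val hvw) with ⟨-, h⟩ | ⟨h₁, h₂⟩
      · exact Subtype.ext h
      · have hwv : w < v := (hp v hv).1.trans_eq' h₁
        exact (lt_asymm hwv ((hp w hw).1.trans_eq' h₂.symm)).elim
    · rintro ⟨e, he⟩
      induction e using Sym2.ind with
      | _ a b =>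
        rcases (G.ne_of_adj he).lt_or_gt with hab | hab
        · refine ⟨⟨b, ne_bot_of_gt hab⟩, Subtype.ext ?_⟩
          exact congrArg (s(·, b)) (huniq b _ a ⟨hab, he⟩).symm
        · refine ⟨⟨a, ne_bot_of_gt hab⟩, Subtype.ext ?_⟩
          exact (congrArg (s(·, a)) (huniq a _ b ⟨hab, he.symm⟩).symm).trans Sym2.eq_swap
  classical
  rw [← Nat.card_congr (Equiv.ofBijective f hf), ← Finite.card_option,
    Nat.card_congr (Equiv.optionSubtypeNe ⊥)]

theorem isTree_of_existsUnique_lt_adj [Finite V]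
    (h : ∀ v, v ≠ ⊥ → ∃! a, a < v ∧ G.Adj a v) : G.IsTree :=
  isTree_iff_connected_and_card.2
    ⟨connected_of_exists_lt_adj fun v hv => (h v hv).exists.imp fun _ => id,
      card_edgeSet_add_one_of_existsUnique_lt_adj h⟩

theorem eq_of_le_of_exists_lt_adj (hle : G ≤ H) (hG : ∀ v, v ≠ ⊥ → ∃ a < v, G.Adj a v)
    (hH : ∀ v a b, a < v → b < v → H.Adj a v → H.Adj b v → a = b) : G = H := by
  have key : ∀ a b, a < b → H.Adj a b → G.Adj a b := fun a b hab hH' => by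
    obtain ⟨c, hcb, hc⟩ := hG b (ne_bot_of_gt hab)
    rwa [hH b a c hab hcb hH' (hle hc)]
  refine le_antisymm hle fun a b hab => ?_
  rcases hab.ne.lt_or_gt with h | h
  · exact key a b h hab
  · exact (key b a h hab.symm).symm

end SimpleGraph

section Dyck

open DyckStep

def boolEquivDyckStep : Bool ≃ DyckStep where
  toFun b := if b then U else D
  invFun s := s = U
  left_inv b := by cases b <;> rfl
  right_inv s := by cases s <;> rfl

theorem isDyckWord_iff_map_boolEquivDyckStep (p : List Bool) :
    IsDyckWord p ↔
      (∀ k, ((p.map boolEquivDyckStep).take k).count D ≤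
        ((p.map boolEquivDyckStep).take k).count U) ∧
      (p.map boolEquivDyckStep).count U = (p.map boolEquivDyckStep).count D := by
  have hcount (l : List Bool) (b : Bool) :
      (l.map boolEquivDyckStep).count (boolEquivDyckStep b) = l.count b :=
    List.count_map_of_injective _ _ boolEquivDyckStep.injective b
  simp only [← List.map_take, show U = boolEquivDyckStep true from rfl,
    show D = boolEquivDyckStep false from rfl, hcount, IsDyckWord]

def dyckWordEquiv : {p : List Bool // IsDyckWord p} ≃ DyckWord where
  toFun p := ⟨_, ((isDyckWord_iff_map_boolEquivDyckStep p.1).1 p.2).2,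
    ((isDyckWord_iff_map_boolEquivDyckStep p.1).1 p.2).1⟩
  invFun w := ⟨w.toList.map boolEquivDyckStep.symm, by
    rw [isDyckWord_iff_map_boolEquivDyckStep, List.map_map, Equiv.self_comp_symm, List.map_id]
    exact ⟨w.count_D_le_count_U, w.count_U_eq_count_D⟩⟩
  left_inv p := Subtype.ext <| by simp
  right_inv w := DyckWord.ext <| by simp

def dyckWordSemilengthEquiv (n : ℕ) :
    {p : List Bool // IsDyckWord p ∧ p.length = 2 * n} ≃ {w : DyckWord // w.semilength = n} :=
  (Equiv.subtypeSubtypeEquivSubtypeInter _ _).symm.trans <|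
    dyckWordEquiv.subtypeEquiv fun p => by
      have h : 2 * (dyckWordEquiv p).semilength = p.1.length := by
        rw [DyckWord.two_mul_semilength_eq_length]
        simp [dyckWordEquiv]
      omega

theorem card_isDyckWord_length_eq (n : ℕ) :
    Nat.card {p : List Bool // IsDyckWord p ∧ p.length = 2 * n} = catalan n := by
  rw [Nat.card_congr (dyckWordSemilengthEquiv n), Nat.card_eq_fintype_card,
    DyckWord.card_dyckWord_semilength_eq_catalan]

end Dyck

namespace NCOTree

/-- `q i` is the parent of vertex `i + 1`; the second clause says that the edges
`{q i, i + 1}` and `{q j, j + 1}` do not cross. -/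
def IsParentSeq (n : ℕ) (q : Fin n → ℕ) : Prop :=
  (∀ i : Fin n, q i ≤ i) ∧ ∀ i j : Fin n, i < j → q j ≤ q i ∨ (i : ℕ) < q j

abbrev ParentSeq (n : ℕ) := {q : Fin n → ℕ // IsParentSeq n q}

section Glue

variable {n : ℕ}

/-- The parent sequence on `0, …, n + 1` in which `k + 1` is the last child of the root,
the vertices `0, …, k` carry `a` and the vertices `k + 1, …, n + 1` carry `b`, shifted. -/
def glue (k : Fin (n + 1)) (a : Fin k → ℕ) (b : Fin (n - k) → ℕ) : Fin (n + 1) → ℕ :=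
  fun i => if h : (i : ℕ) < k then a ⟨i, h⟩ else if h' : (i : ℕ) = k then 0 else
    b ⟨i - (k + 1), by have := i.is_lt; omega⟩ + (k + 1)

variable (k : Fin (n + 1)) (a : Fin k → ℕ) (b : Fin (n - k) → ℕ)

theorem glue_of_lt (i : Fin (n + 1)) (h : (i : ℕ) < k) : glue k a b i = a ⟨i, h⟩ :=
  dif_pos h

theorem glue_self : glue k a b k = 0 := by
  simp [glue]

theorem glue_of_gt (i : Fin (n + 1)) (h : (k : ℕ) < i) :
    glue k a b i = b ⟨i - (k + 1), by have := i.is_lt; omega⟩ + (k + 1) := by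
  rw [glue, dif_neg (by omega), dif_neg (by omega)]

theorem isParentSeq_glue (ha : IsParentSeq k a) (hb : IsParentSeq (n - k) b) :
    IsParentSeq (n + 1) (glue k a b) := by
  constructor
  · intro i
    rcases lt_trichotomy (i : ℕ) k with h | h | h
    · rw [glue_of_lt k a b i h]; exact ha.1 _
    · rw [show i = k from Fin.ext h, glue_self]; exact Nat.zero_le _
    · rw [glue_of_gt k a b i h]; have := hb.1 ⟨i - (k + 1), by have := i.is_lt; omega⟩
      simp only at this; omega
  · intro i j hij
    rw [Fin.lt_def] at hij
    rcases lt_trichotomy (j : ℕ) k with hj | hj | hj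
    · rw [glue_of_lt k a b i (by omega), glue_of_lt k a b j hj]
      exact ha.2 ⟨i, _⟩ ⟨j, hj⟩ hij
    · rw [show j = k from Fin.ext hj, glue_self]; exact Or.inl (Nat.zero_le _)
    · rw [glue_of_gt k a b j hj]
      rcases lt_or_ge (k : ℕ) i with hi | hi
      · rw [glue_of_gt k a b i hi]
        have := hb.2 ⟨i - (k + 1), by have := i.is_lt; omega⟩
          ⟨j - (k + 1), by have := j.is_lt; omega⟩ (by rw [Fin.lt_def]; simp only; omega)
        simp only at this; omega
      · right; omega

variable {k a b}

theorem le_of_glue_eq {k' : Fin (n + 1)} {a' : Fin k' → ℕ} {b' : Fin (n - k') → ℕ}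
    (h : glue k a b = glue k' a' b') : k' ≤ k := by
  by_contra! hlt
  have := congrFun h k'
  rw [glue_self, glue_of_gt k a b k' hlt] at this
  omega

/-- Split at the last child `k + 1` of the root: every later vertex has its parent among
`k + 1, …, n + 1`, since a smaller parent would give an edge crossing `{0, k + 1}` or a later
child of the root. -/
theorem exists_glue_eq {q : Fin (n + 1) → ℕ} (hq : IsParentSeq (n + 1) q) :
    ∃ (k : Fin (n + 1)) (a : Fin k → ℕ) (b : Fin (n - k) → ℕ),
      IsParentSeq k a ∧ IsParentSeq (n - k) b ∧ glue k a b = q := by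
  obtain ⟨k, hk, hkmax⟩ := exists_max_image (univ.filter fun i => q i = 0) id
    ⟨0, by simpa using hq.1 0⟩
  rw [mem_filter] at hk
  have hgt : ∀ i : Fin (n + 1), (k : ℕ) < i → (k : ℕ) < q i := fun i hi => by
    refine (hq.2 k i hi).resolve_left fun h => ?_
    have := hkmax i (by simp only [mem_filter, mem_univ, true_and]; omega)
    exact absurd hi (not_lt.2 this)
  refine ⟨k, fun i => q ⟨i, by omega⟩, fun j => q ⟨k + 1 + j, by omega⟩ - (k + 1),
    ⟨fun i => hq.1 _, fun i j hij => hq.2 _ _ hij⟩, ⟨fun j => ?_, fun i j hij => ?_⟩, ?_⟩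
  · have := hq.1 ⟨k + 1 + j, by omega⟩
    simp only at this ⊢; omega
  · rw [Fin.lt_def] at hij
    have hnc := hq.2 ⟨k + 1 + i, by omega⟩ ⟨k + 1 + j, by omega⟩
      (by rw [Fin.lt_def]; simp only; omega)
    have hi := hgt ⟨k + 1 + i, by omega⟩ (by simp only; omega)
    have hj := hgt ⟨k + 1 + j, by omega⟩ (by simp only; omega)
    simp only at hnc hi hj ⊢; omega
  · funext i
    rcases lt_trichotomy (i : ℕ) k with h | h | h
    · rw [glue_of_lt k _ _ i h]
    · rw [show i = k from Fin.ext h, glue_self, hk.2]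
    · rw [glue_of_gt k _ _ i h]
      have := hgt i h
      have hi : (⟨k + 1 + (i - (k + 1)), by omega⟩ : Fin (n + 1)) = i :=
        Fin.ext (by simp only; omega)
      simp only [hi]; omega

end Glue

noncomputable def glueEquiv (n : ℕ) :
    (Σ k : Fin (n + 1), ParentSeq k × ParentSeq (n - k)) ≃ ParentSeq (n + 1) :=
  Equiv.ofBijective
    (fun x => ⟨glue x.1 x.2.1.1 x.2.2.1, isParentSeq_glue _ _ _ x.2.1.2 x.2.2.2⟩) <| by
    refine ⟨?_, fun q => ?_⟩
    · rintro ⟨k, ⟨a, ha⟩, ⟨b, hb⟩⟩ ⟨k', ⟨a', ha'⟩, ⟨b', hb'⟩⟩ h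
      have h : glue k a b = glue k' a' b' := congrArg Subtype.val h
      obtain rfl : k = k' := le_antisymm (le_of_glue_eq h.symm) (le_of_glue_eq h)
      obtain rfl : a = a' := funext fun i => by
        simpa [glue_of_lt] using congrFun h ⟨i, by omega⟩
      obtain rfl : b = b' := funext fun j => by
        have hj := congrFun h ⟨k + 1 + j, by omega⟩
        rw [glue_of_gt k a b _ (by simp only; omega),
          glue_of_gt k a b' _ (by simp only; omega)] at hj
        simpa using hj
      rfl
    · obtain ⟨k, a, b, ha, hb, hq⟩ := exists_glue_eq q.2
      exact ⟨⟨k, ⟨a, ha⟩, ⟨b, hb⟩⟩, Subtype.ext hq⟩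

instance (n : ℕ) : Finite (ParentSeq n) :=
  Finite.of_injective (β := (i : Fin n) → Fin (i + 1))
    (fun q i => ⟨q.1 i, Nat.lt_succ_of_le (q.2.1 i)⟩)
    fun _ _ h => Subtype.ext <| funext fun i => congrArg Fin.val (congrFun h i)

theorem card_parentSeq (n : ℕ) : Nat.card (ParentSeq n) = catalan n := by
  induction n using Nat.strong_induction_on with
  | _ n ih =>
    cases n with
    | zero =>
      exact Nat.card_of_subsingleton (⟨finZeroElim, finZeroElim, finZeroElim⟩ : ParentSeq 0)
        |>.trans catalan_zero.symm
    | succ n =>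
      rw [← Nat.card_congr (glueEquiv n), Nat.card_sigma, catalan_succ]
      refine sum_congr rfl fun k _ => ?_
      rw [Nat.card_prod, ih _ (by omega), ih _ (by omega)]

section Graph

variable {n : ℕ} {q : Fin n → ℕ}

def graphOf (q : Fin n → ℕ) : SimpleGraph (Fin (n + 1)) :=
  SimpleGraph.fromRel fun a b => ∃ i : Fin n, (a : ℕ) = q i ∧ (b : ℕ) = i + 1

theorem graphOf_adj_iff (hq : ∀ i : Fin n, q i ≤ i) {a b : Fin (n + 1)} (hab : a < b) :
    (graphOf q).Adj a b ↔ ∃ i : Fin n, (a : ℕ) = q i ∧ (b : ℕ) = i + 1 := by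
  rw [graphOf, SimpleGraph.fromRel_adj]
  constructor
  · rintro ⟨-, h | ⟨i, hb, ha⟩⟩
    · exact h
    · have := hq i
      rw [Fin.lt_def] at hab
      omega
  · exact fun h => ⟨hab.ne, Or.inl h⟩

theorem existsUnique_lt_graphOf_adj (hq : ∀ i : Fin n, q i ≤ i) (v : Fin (n + 1))
    (hv : (v : ℕ) ≠ 0) : ∃! a, a < v ∧ (graphOf q).Adj a v := by
  have hi : (v : ℕ) - 1 < n := by omega
  have hpv : q ⟨_, hi⟩ < v := by have := hq ⟨_, hi⟩; simp only at this; omega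
  refine ⟨⟨q ⟨_, hi⟩, by omega⟩, ⟨hpv, ?_⟩, ?_⟩
  · exact (graphOf_adj_iff hq hpv).2 ⟨⟨_, hi⟩, rfl, by simp only; omega⟩
  · rintro a ⟨hav, hadj⟩
    obtain ⟨i, ha, hv'⟩ := (graphOf_adj_iff hq hav).1 hadj
    obtain rfl : i = ⟨_, hi⟩ := Fin.ext (by simp only; omega)
    exact Fin.ext ha

theorem graphOf_noncrossing (hq : IsParentSeq n q) (a b c d : Fin (n + 1))
    (hab : (graphOf q).Adj a b) (hcd : (graphOf q).Adj c d) : ¬(a < c ∧ c < b ∧ b < d) := by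
  rintro ⟨hac, hcb, hbd⟩
  obtain ⟨i, ha, hb⟩ := (graphOf_adj_iff hq.1 (hac.trans hcb)).1 hab
  obtain ⟨j, hc, hd⟩ := (graphOf_adj_iff hq.1 (hcb.trans hbd)).1 hcd
  rw [Fin.lt_def] at hac hcb hbd
  have hij : i < j := by rw [Fin.lt_def]; omega
  rcases hq.2 i j hij with h | h <;> omega

theorem isNCOTree_graphOf (hq : IsParentSeq n q) : IsNCOTree (graphOf q) := by
  have hpar := existsUnique_lt_graphOf_adj hq.1
  refine ⟨⟨SimpleGraph.isTree_of_existsUnique_lt_adj fun v hv => hpar v ?_,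
    graphOf_noncrossing hq⟩, hpar⟩
  rwa [bot_eq_zero, ← Fin.val_ne_iff] at hv

theorem graphOf_injective {q' : Fin n → ℕ} (hq : ∀ i : Fin n, q i ≤ i)
    (hq' : ∀ i : Fin n, q' i ≤ i) (h : graphOf q = graphOf q') : q = q' := by
  funext i
  have hlt : (⟨q i, by have := hq i; omega⟩ : Fin (n + 1)) < i.succ := by
    have := hq i; rw [Fin.lt_def]; simp only [Fin.val_succ]; omega
  have hadj : (graphOf q).Adj _ i.succ := (graphOf_adj_iff hq hlt).2 ⟨i, rfl, Fin.val_succ i⟩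
  obtain ⟨j, hj, hij⟩ := (graphOf_adj_iff hq' hlt).1 (h ▸ hadj)
  obtain rfl : i = j := Fin.ext (by simp only [Fin.val_succ] at hij; omega)
  exact hj

theorem exists_graphOf_eq {G : SimpleGraph (Fin (n + 1))} (hG : IsNCOTree G) :
    ∃ q, IsParentSeq n q ∧ graphOf q = G := by
  choose p hp using fun i : Fin n => (hG.2 i.succ (by simp)).exists
  have hq : ∀ i : Fin n, (p i : ℕ) ≤ i := fun i => by
    have := (hp i).1; rw [Fin.lt_def, Fin.val_succ] at this; omega
  refine ⟨fun i => p i, ⟨hq, fun i j hij => ?_⟩, ?_⟩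
  · by_contra! h
    refine hG.1.2 _ _ _ _ (hp i).2 (hp j).2 ⟨h.1, ?_, Fin.succ_lt_succ_iff.2 hij⟩
    rw [Fin.lt_def, Fin.val_succ]; omega
  · refine SimpleGraph.eq_of_le_of_exists_lt_adj ?_ ?_ ?_
    · have hedge : ∀ (a b : Fin (n + 1)) (i : Fin n), (a : ℕ) = p i → (b : ℕ) = i + 1 →
          G.Adj a b := by
        rintro a b i ha hb
        rw [Fin.ext ha, show b = i.succ from Fin.ext (by simpa using hb)]
        exact (hp i).2
      rintro a b ⟨-, ⟨i, ha, hb⟩ | ⟨i, hb, ha⟩⟩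
      · exact hedge a b i ha hb
      · exact (hedge b a i hb ha).symm
    · intro v hv
      rw [bot_eq_zero, ← Fin.val_ne_iff] at hv
      exact (existsUnique_lt_graphOf_adj hq v hv).exists
    · intro v a b hav hbv ha hb
      have hv : (v : ℕ) ≠ 0 := by rw [Fin.lt_def] at hav; omega
      exact (hG.2 v hv).unique ⟨hav, ha⟩ ⟨hbv, hb⟩

end Graph

noncomputable def parentSeqEquiv (n : ℕ) :
    ParentSeq n ≃ {G : SimpleGraph (Fin (n + 1)) // IsNCOTree G} :=
  Equiv.ofBijective (fun q => ⟨graphOf q.1, isNCOTree_graphOf q.2⟩)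
    ⟨fun q q' h => Subtype.ext (graphOf_injective q.2.1 q'.2.1 (congrArg Subtype.val h)),
      fun G => by
        obtain ⟨q, hq, hqG⟩ := exists_graphOf_eq G.2
        exact ⟨⟨q, hq⟩, Subtype.ext hqG⟩⟩

end NCOTree

/-- Dyck paths of length `2n` are in bijection with non-crossing
out-trees on `n+1` vertices; consequently the number of NCO-trees on `n+1`
vertices is the Catalan number `Cₙ`. -/
theorem dyck_equiv_nco_tree (n : ℕ) :
    Nonempty ({p : List Bool // IsDyckWord p ∧ p.length = 2 * n} ≃
      {G : SimpleGraph (Fin (n + 1)) // IsNCOTree G}) ∧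
    Nat.card {G : SimpleGraph (Fin (n + 1)) // IsNCOTree G} = catalan n := by
  have hTree : Nat.card {G : SimpleGraph (Fin (n + 1)) // IsNCOTree G} = catalan n :=
    (Nat.card_congr (NCOTree.parentSeqEquiv n)).symm.trans (NCOTree.card_parentSeq n)
  have hDyck := card_isDyckWord_length_eq n
  have := Finite.of_equiv _ (dyckWordSemilengthEquiv n).symm
  exact ⟨Finite.card_eq.1 (hDyck.trans hTree.symm), hTree⟩
end

section
/- For every n >= 1, sum_{p=0}^{n-1} ((-1)^p/(n-p)) * binomial(n-p, p) * binomial(3n-2p, n-p-1) = (1/(n+1)) * binomial(2n, n). -/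
/-!
Creative telescoping. Both sides satisfy `(n + 2) a (n + 1) = 2 (2n + 1) a n` with `a 1 = 1`.
For the sum this comes from summing over `p` the identity
`(n + 2) F (n + 1) p - 2 (2n + 1) F n p = G n (p + 1) - G n p`, where `G n p` is a rational
function of `n, p` (found by Zeilberger's algorithm) times `F (n + 1) p`. Writing `n = 2p + m`,
the nonzero summands are the hypergeometric terms `(-1)^p (4p + 3m)! / (p! m! (3p + 2m + 1)!)`,
so the identity reduces to a polynomial identity after dividing by one of them.
-/
open Nat Finset

namespace AlternatingCatalan

def summand (n p : ℕ) : ℚ :=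
  ((-1) ^ p / ((n - p : ℕ) : ℚ)) * ((n - p).choose p : ℚ) *
    ((3 * n - 2 * p).choose (n - p - 1) : ℚ)

def hyperTerm (p m : ℕ) : ℚ :=
  (-1) ^ p * (4 * p + 3 * m)! / (p ! * m ! * (3 * p + 2 * m + 1)!)

lemma summand_eq_zero_of_lt {n p : ℕ} (h : n < 2 * p) : summand n p = 0 := by
  rw [summand, Nat.choose_eq_zero_of_lt (by omega : n - p < p)]
  simp

-- At `p = m = 0` the summand is the junk value `1 / 0 * 1 * 1 = 0`, while `hyperTerm 0 0 = 1`.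
lemma summand_eq_hyperTerm (p m : ℕ) (h : 0 < p + m) :
    summand (2 * p + m) p = hyperTerm p m := by
  obtain ⟨k, hk⟩ : ∃ k, p + m = k + 1 := ⟨p + m - 1, by omega⟩
  rw [summand, hyperTerm, show 2 * p + m - p = k + 1 by omega,
    show 3 * (2 * p + m) - 2 * p = 4 * p + 3 * m by omega, show k + 1 - 1 = k by omega,
    Nat.cast_choose ℚ (show p ≤ k + 1 by omega),
    Nat.cast_choose ℚ (show k ≤ 4 * p + 3 * m by omega),
    show k + 1 - p = m by omega, show 4 * p + 3 * m - k = 3 * p + 2 * m + 1 by omega,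
    Nat.factorial_succ k]
  push_cast
  field_simp

lemma hyperTerm_succ_right (p m : ℕ) :
    hyperTerm p (m + 1) = hyperTerm p m *
      ((4 * p + 3 * m + 3) * (4 * p + 3 * m + 2) * (4 * p + 3 * m + 1)) /
      ((m + 1) * (3 * p + 2 * m + 3) * (3 * p + 2 * m + 2)) := by
  rw [hyperTerm, hyperTerm, show 4 * p + 3 * (m + 1) = 4 * p + 3 * m + 2 + 1 by ring,
    show 3 * p + 2 * (m + 1) + 1 = 3 * p + 2 * m + 1 + 1 + 1 by ring]
  simp only [Nat.factorial_succ]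
  push_cast
  field_simp
  ring

lemma hyperTerm_succ_left (p m : ℕ) :
    hyperTerm (p + 1) m = -hyperTerm p m *
      ((4 * p + 3 * m + 4) * (4 * p + 3 * m + 3) * (4 * p + 3 * m + 2) * (4 * p + 3 * m + 1)) /
      ((p + 1) * (3 * p + 2 * m + 4) * (3 * p + 2 * m + 3) * (3 * p + 2 * m + 2)) := by
  rw [hyperTerm, hyperTerm, show 4 * (p + 1) + 3 * m = 4 * p + 3 * m + 3 + 1 by ring,
    show 3 * (p + 1) + 2 * m + 1 = 3 * p + 2 * m + 1 + 1 + 1 + 1 by ring]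
  simp only [Nat.factorial_succ, pow_succ]
  push_cast
  field_simp
  ring

def certificate (n p : ℕ) : ℚ :=
  -p * (2 * p ^ 2 - (6 * n ^ 2 + 23 * n + 19) * p + (11 * n ^ 3 + 50 * n ^ 2 + 72 * n + 33)) /
    ((2 * n + 3) * (n + 1) * (3 * n + 3 - 2 * p)) * summand (n + 1) p

lemma summand_telescope_of_two_mul_lt {n p : ℕ} (h : 2 * p < n) :
    (n + 2) * summand (n + 1) p - 2 * (2 * n + 1) * summand n p
      = certificate n (p + 1) - certificate n p := by
  obtain ⟨m, rfl⟩ := Nat.exists_eq_add_of_lt h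
  have h₀ : summand (2 * p + m + 1) p = hyperTerm p (m + 1) :=
    summand_eq_hyperTerm p (m + 1) (by omega)
  have h₁ : summand (2 * p + m + 1 + 1) p = hyperTerm p (m + 1 + 1) :=
    summand_eq_hyperTerm p (m + 1 + 1) (by omega)
  have h₂ : summand (2 * p + m + 1 + 1) (p + 1) = hyperTerm (p + 1) m :=
    (congrArg (summand · (p + 1)) (by ring)).trans (summand_eq_hyperTerm (p + 1) m (by omega))
  rw [certificate, certificate, h₀, h₁, h₂, hyperTerm_succ_right, hyperTerm_succ_right,
    hyperTerm_succ_left]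
  push_cast
  rw [show (3 * (2 * p + m + 1 : ℚ) + 3 - 2 * (p + 1)) = 4 * p + 3 * m + 4 by ring,
    show (3 * (2 * p + m + 1 : ℚ) + 3 - 2 * p) = 4 * p + 3 * m + 6 by ring]
  field_simp
  ring

lemma summand_telescope {n p : ℕ} (hn : 1 ≤ n) (hp : p ≤ n) :
    (n + 2) * summand (n + 1) p - 2 * (2 * n + 1) * summand n p
      = certificate n (p + 1) - certificate n p := by
  rcases lt_or_ge (2 * p) n with h | h
  · exact summand_telescope_of_two_mul_lt h
  rcases (by omega : n = 2 * p ∨ n + 1 = 2 * p ∨ n + 2 ≤ 2 * p) with rfl | h | h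
  · have h₀ : summand (2 * p) p = hyperTerm p 0 := summand_eq_hyperTerm p 0 (by omega)
    have h₁ : summand (2 * p + 1) p = hyperTerm p (0 + 1) := summand_eq_hyperTerm p 1 (by omega)
    rw [certificate, certificate, h₀, h₁, summand_eq_zero_of_lt (by omega),
      hyperTerm_succ_right]
    push_cast
    rw [show (3 * (2 * p : ℚ) + 3 - 2 * p) = 4 * p + 3 by ring]
    field_simp
    ring
  · obtain ⟨q, rfl⟩ : ∃ q, p = q + 1 := ⟨p - 1, by omega⟩
    obtain rfl : n = 2 * q + 1 := by omega
    have h₁ : summand (2 * q + 1 + 1) (q + 1) = hyperTerm (q + 1) 0 :=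
      (congrArg (summand · (q + 1)) (by ring)).trans (summand_eq_hyperTerm (q + 1) 0 (by omega))
    rw [certificate, certificate, h₁, summand_eq_zero_of_lt (by omega),
      summand_eq_zero_of_lt (by omega : 2 * q + 1 + 1 < 2 * (q + 1 + 1))]
    push_cast
    rw [show (3 * (2 * q + 1 : ℚ) + 3 - 2 * (q + 1)) = 4 * q + 4 by ring]
    field_simp
    ring
  · rw [certificate, certificate, summand_eq_zero_of_lt (by omega : n < 2 * p),
      summand_eq_zero_of_lt (by omega : n + 1 < 2 * p),
      summand_eq_zero_of_lt (by omega : n + 1 < 2 * (p + 1))]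
    ring

lemma sum_summand_recurrence {n : ℕ} (hn : 1 ≤ n) :
    (n + 2) * ∑ p ∈ range (n + 1), summand (n + 1) p
      = 2 * (2 * n + 1) * ∑ p ∈ range n, summand n p := by
  have htele : ∑ p ∈ range (n + 1),
      ((n + 2) * summand (n + 1) p - 2 * (2 * n + 1) * summand n p) = 0 := by
    rw [sum_congr rfl fun p hp ↦ summand_telescope hn (Nat.lt_succ_iff.mp (mem_range.mp hp)),
      sum_range_sub (certificate n), certificate, certificate,
      summand_eq_zero_of_lt (by omega : n + 1 < 2 * (n + 1))]
    simp
  rw [sum_sub_distrib, ← mul_sum, ← mul_sum, sum_range_succ (summand n),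
    summand_eq_zero_of_lt (by omega : n < 2 * n), add_zero] at htele
  linarith

lemma succ_mul_sum_summand {n : ℕ} (hn : 1 ≤ n) :
    (n + 1) * ∑ p ∈ range n, summand n p = n.centralBinom := by
  induction n, hn using Nat.le_induction with
  | base => norm_num [summand, centralBinom]
  | succ n hn ih =>
    have hcentral : (n + 1 : ℚ) * (n + 1).centralBinom
        = 2 * (2 * n + 1) * n.centralBinom := by exact_mod_cast succ_mul_centralBinom_succ n
    have : (n + 1 : ℚ) ≠ 0 := by positivity
    apply mul_left_cancel₀ this
    push_cast at hcentral ⊢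
    linear_combination (n + 1 : ℚ) * sum_summand_recurrence hn + 2 * (2 * n + 1) * ih - hcentral

end AlternatingCatalan

open AlternatingCatalan in
/-- for `n ≥ 1`,
`∑_{p=0}^{n-1} ((-1)^p/(n-p)) C(n-p, p) C(3n-2p, n-p-1) = (1/(n+1)) C(2n, n)`. -/
theorem alternating_sum_eq_catalan (n : ℕ) (hn : 1 ≤ n) :
    (∑ p ∈ Finset.range n,
        ((-1) ^ p / ((n - p : ℕ) : ℚ)) * ((n - p).choose p : ℚ) *
          ((3 * n - 2 * p).choose (n - p - 1) : ℚ)) =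
      (1 / (n + 1)) * ((2 * n).choose n : ℚ) := by
  rw [← centralBinom_eq_two_mul_choose, ← succ_mul_sum_summand hn, one_div,
    inv_mul_cancel_left₀ (by positivity)]
  rfl
end

section
/- For 0 <= l <= n-2, the alternating sum sum_{i=0}^{l+1} (-1)^i * binomial(n-1-i, l) * binomial(l+1, i) equals 0, and for l = n-1 it equals 1; consequently sum_{l=0}^{n-1} (1/(l+1)) binomial(n+l+1, l) sum_{i=0}^{l+1} (-1)^i binomial(n-1-i, l) binomial(l+1, i) = (1/(n+1)) binomial(2n, n). -/
/-!
Reversing the order of summation turns the inner alternating sum for `l ≤ n - 2` into the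
`(l + 1)`-st forward difference of the degree-`l` polynomial `x ↦ C(x, l)`, which vanishes.
For `l = n - 1` only the term `i = 0` survives, so the double sum collapses to
`C(2n, n - 1) / n = C(2n, n) / (n + 1)`.
-/

/-- Binomial coefficient `C(a, k)` with the convention that it vanishes for
negative `a`. -/
def ibin (a : ℤ) (k : ℕ) : ℚ :=
  if 0 ≤ a then (a.toNat.choose k : ℚ) else 0

open Finset

theorem ibin_natCast (m k : ℕ) : ibin m k = m.choose k := by
  simp [ibin]

theorem ibin_eq_zero_of_lt {a : ℤ} {k : ℕ} (h : a < k) : ibin a k = 0 := by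
  unfold ibin
  split_ifs with ha
  · rw [Nat.choose_eq_zero_of_lt (by omega), Nat.cast_zero]
  · rfl

theorem fwdDiff_iter_succ_choose_self (l : ℕ) :
    (fwdDiff 1)^[l + 1] (fun x ↦ x.choose l : ℕ → ℤ) = 0 := by
  rw [Function.iterate_succ_apply', (by simpa using fwdDiff_iter_choose 0 l :
    (fwdDiff 1)^[l] (fun x ↦ x.choose l : ℕ → ℤ) = fun _ ↦ 1), fwdDiff_const]
  rfl

theorem alternating_sum_choose_mul_choose_sub (l N : ℕ) (h : l < N) :
    ∑ i ∈ range (l + 2), (-1 : ℤ) ^ i * (l + 1).choose i * (N - i).choose l = 0 := by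
  have hΔ := congr_fun (fwdDiff_iter_succ_choose_self l) (N - (l + 1))
  rw [fwdDiff_iter_eq_sum_shift, ← sum_range_reflect, Pi.zero_apply] at hΔ
  rw [← hΔ]
  refine sum_congr rfl fun i hi ↦ ?_
  rw [mem_range] at hi
  rw [show l + 1 + 1 - 1 - i = l + 1 - i by omega, Nat.sub_sub_self (by omega : i ≤ l + 1), Nat.choose_symm (by omega : i ≤ l + 1),
    smul_eq_mul, nsmul_one, Nat.cast_id, show N - (l + 1) + (l + 1 - i) = N - i by omega]

theorem choose_div_succ_eq (m : ℕ) :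
    ((2 * m + 2).choose m : ℚ) / (m + 1) = ((2 * m + 2).choose (m + 1) : ℚ) / (m + 2) := by
  have h := Nat.choose_succ_right_eq (2 * m + 2) m
  rw [show 2 * m + 2 - m = m + 2 by omega] at h
  rw [div_eq_div_iff (by positivity) (by positivity)]
  exact_mod_cast h.symm

/-- for `0 ≤ l ≤ n-2` the alternating sum
`∑_{i=0}^{l+1} (-1)^i C(n-1-i, l) C(l+1, i)` vanishes, for `l = n-1` it equals
`1`; consequently the full double sum equals the Catalan number. -/
theorem alternating_binomial_identity (n : ℕ) (hn : 1 ≤ n) :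
    (∀ l : ℕ, l + 2 ≤ n →
      (∑ i ∈ Finset.range (l + 2),
        (-1) ^ i * ibin ((n : ℤ) - 1 - i) l * ((l + 1).choose i : ℚ)) = 0) ∧
    (∑ i ∈ Finset.range (n + 1),
        (-1) ^ i * ibin ((n : ℤ) - 1 - i) (n - 1) * (n.choose i : ℚ)) = 1 ∧
    (∑ l ∈ Finset.range n, (1 / ((l : ℚ) + 1)) * ((n + l + 1).choose l : ℚ) *
        ∑ i ∈ Finset.range (l + 2),
          (-1) ^ i * ibin ((n : ℤ) - 1 - i) l * ((l + 1).choose i : ℚ)) =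
      (1 / (n + 1)) * ((2 * n).choose n : ℚ) := by
  obtain ⟨m, rfl⟩ := Nat.exists_eq_add_of_le' hn
  have vanish (l : ℕ) (hl : l + 2 ≤ m + 1) : ∑ i ∈ range (l + 2),
      (-1) ^ i * ibin (((m + 1 : ℕ) : ℤ) - 1 - i) l * ((l + 1).choose i : ℚ) = 0 := by
    have h := congrArg (Int.cast : ℤ → ℚ) (alternating_sum_choose_mul_choose_sub l m (by omega))
    push_cast at h
    rw [← h]
    refine sum_congr rfl fun i hi ↦ ?_
    rw [show ((m + 1 : ℕ) : ℤ) - 1 - i = ((m - i : ℕ) : ℤ) by simp at hi; omega, ibin_natCast]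
    ring
  have top : ∑ i ∈ range (m + 2),
      (-1) ^ i * ibin (((m + 1 : ℕ) : ℤ) - 1 - i) m * ((m + 1).choose i : ℚ) = 1 := by
    rw [sum_eq_single_of_mem 0 (by simp)]
    · simpa using ibin_natCast m m
    · intro i _ hi
      rw [ibin_eq_zero_of_lt (by omega), mul_zero, zero_mul]
  refine ⟨vanish, top, ?_⟩
  rw [sum_range_succ, sum_eq_zero fun l hl ↦ by rw [vanish l (by simp at hl; omega), mul_zero],
    zero_add, top]
  rw [show m + 1 + m + 1 = 2 * m + 2 by ring, show 2 * (m + 1) = 2 * m + 2 by ring]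
  push_cast
  rw [mul_one, one_div_mul_eq_div, one_div_mul_eq_div, choose_div_succ_eq]
  ring
end

section
/- The number of Dyck paths of length 2n with each k-ascent coloured by a Schroeder path of length 2k equals the number of lattice paths from (0,0) to (3n,0) using steps H=(1,2), G=(2,1), D=(1,-1) that never pass below the x-axis. -/
open Finset PowerSeries

/-- A Schröder path of length `2n`: steps `U=(1,1)`, `D=(1,-1)`, `L=(2,0)`,
from `(0,0)` to `(2n,0)`, staying weakly above the x-axis. -/
def IsSchroederPath (n : ℕ) (p : List (ℤ × ℤ)) : Prop :=
  (∀ s ∈ p, s = ((1 : ℤ), (1 : ℤ)) ∨ s = ((1 : ℤ), (-1 : ℤ)) ∨ s = ((2 : ℤ), (0 : ℤ))) ∧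
  (p.map Prod.fst).sum = 2 * n ∧
  (p.map Prod.snd).sum = 0 ∧
  ∀ k, 0 ≤ ((p.take k).map Prod.snd).sum

/-- A path from `(0,0)` to `(3n,0)` with steps `H=(1,2)`, `G=(2,1)`,
`D=(1,-1)`, staying weakly above the x-axis. -/
def IsTPath (n : ℕ) (p : List (ℤ × ℤ)) : Prop :=
  (∀ s ∈ p, s = ((1 : ℤ), (2 : ℤ)) ∨ s = ((2 : ℤ), (1 : ℤ)) ∨ s = ((1 : ℤ), (-1 : ℤ))) ∧
  (p.map Prod.fst).sum = 3 * n ∧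
  (p.map Prod.snd).sum = 0 ∧
  ∀ k, 0 ≤ ((p.take k).map Prod.snd).sum

/-!
Cutting a Dyck path after each down-step writes it as `U^k₁ D ⋯ U^kₙ D`, and the Dyck condition
says that the Łukasiewicz path with steps `kᵢ - 1` never goes below the axis. Colouring the
ascents therefore amounts to colouring each step `kᵢ` by a Schröder path of semilength `kᵢ` (the
empty one if `kᵢ = 0`).

Relabelling `U ↦ H`, `L ↦ G` turns a Schröder path of semilength `k` into a path that climbs by
exactly `k` and never goes below its start. Replacing each coloured step `kᵢ` by the relabelled
Schröder path followed by `D` produces a `T`-path with the same heights at the block boundaries.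
Conversely, a `T`-path is cut uniquely into such blocks: a block ends at the first `D` at which the
path, with `H`, `G` read back as `U`, `L`, drops below its height at the start of the block.
-/

namespace ColouredDyckSchroeder

variable {α β : Type*}

def PrefixNonneg (h : ℤ) (l : List ℤ) : Prop :=
  ∀ j, 0 ≤ h + (l.take j).sum

section PrefixNonneg

variable {h : ℤ}

theorem PrefixNonneg.nonneg {l : List ℤ} (hl : PrefixNonneg h l) : 0 ≤ h := by
  simpa using hl 0

@[simp] theorem prefixNonneg_nil : PrefixNonneg h [] ↔ 0 ≤ h := by
  simp [PrefixNonneg]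

@[simp] theorem prefixNonneg_cons {a : ℤ} {l : List ℤ} :
    PrefixNonneg h (a :: l) ↔ 0 ≤ h ∧ PrefixNonneg (h + a) l := by
  refine ⟨fun hl => ⟨hl.nonneg, fun j => by simpa [add_assoc] using hl (j + 1)⟩, ?_⟩
  rintro ⟨h0, hl⟩ (_ | j)
  · simpa using h0
  · simpa [add_assoc] using hl j

theorem prefixNonneg_append {l₁ l₂ : List ℤ} :
    PrefixNonneg h (l₁ ++ l₂) ↔ PrefixNonneg h l₁ ∧ PrefixNonneg (h + l₁.sum) l₂ := by
  induction l₁ generalizing h with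
  | nil => simpa using fun hl => prefixNonneg_nil.2 hl.nonneg
  | cons a l₁ ih => simp [ih, add_assoc, and_assoc]

theorem prefixNonneg_flatten {L : List (List ℤ)}
    (hL : ∀ l ∈ L, ∀ j, min 0 l.sum ≤ (l.take j).sum) :
    PrefixNonneg h L.flatten ↔ PrefixNonneg h (L.map List.sum) := by
  induction L generalizing h with
  | nil => simp
  | cons l L ih =>
    rw [List.flatten_cons, prefixNonneg_append, List.map_cons, prefixNonneg_cons,
      ih fun l' hl' => hL l' (List.mem_cons_of_mem l hl')]
    refine and_congr_left fun hrest => ⟨PrefixNonneg.nonneg, fun h0 j => ?_⟩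
    have := hL l List.mem_cons_self j
    have := hrest.nonneg
    omega

theorem min_zero_sum_le_take_sum {a : List ℤ} (ha : PrefixNonneg 0 a) (x : ℤ) (j : ℕ) :
    min 0 (a ++ [x]).sum ≤ ((a ++ [x]).take j).sum := by
  rw [List.take_append]
  rcases le_or_gt j a.length with hj | hj
  · have := ha j
    simp [Nat.sub_eq_zero_of_le hj]
    omega
  · rw [List.take_of_length_le hj.le, List.take_of_length_le (by simp; omega)]
    exact min_le_right _ _

/-- Discrete intermediate value theorem. -/
theorem exists_eq_append_cons_of_sum_neg {w : α → ℤ} {l : List α} (hw : ∀ x ∈ l, -1 ≤ w x)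
    (h0 : 0 ≤ h) (hl : h + (l.map w).sum < 0) :
    ∃ a x r, l = a ++ x :: r ∧ w x = -1 ∧ PrefixNonneg h (a.map w) ∧
      h + (a.map w).sum = 0 := by
  induction l generalizing h with
  | nil => simp at hl; omega
  | cons y l ih =>
    have hy := hw y List.mem_cons_self
    by_cases hstop : h + w y < 0
    · exact ⟨[], y, l, rfl, by omega, by simpa using h0, by simp; omega⟩
    · obtain ⟨a, x, r, rfl, hx, ha, hsum⟩ :=
        ih (h := h + w y) (fun x hx => hw x (List.mem_cons_of_mem y hx)) (by omega)
          (by simp at hl; omega)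
      exact ⟨y :: a, x, r, rfl, hx, by simpa using ⟨h0, ha⟩, by simp; omega⟩

theorem eq_of_append_cons_eq {w : α → ℤ} {a a' r r' : List α} {x x' : α}
    (hx : w x < 0) (hx' : w x' < 0)
    (ha : PrefixNonneg 0 (a.map w)) (ha' : PrefixNonneg 0 (a'.map w))
    (hsa : (a.map w).sum = 0) (hsa' : (a'.map w).sum = 0)
    (h : a ++ x :: r = a' ++ x' :: r') : a = a' := by
  wlog hlen : a.length ≤ a'.length generalizing a a' r r' x x'
  · exact (this hx' hx ha' ha hsa' hsa h.symm (by omega)).symm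
  rcases hlen.lt_or_eq with hlt | heq
  · have htake : a'.take (a.length + 1) = a ++ [x] := by
      have := congrArg (List.take (a.length + 1)) h
      rw [List.take_append_of_le_length hlt] at this
      simpa [List.take_append, List.take_of_length_le (Nat.le_succ a.length)]
        using this.symm
    have := ha' (a.length + 1)
    rw [← List.map_take, htake] at this
    simp [hsa] at this
    omega
  · exact (List.append_inj h heq).1

theorem injOn_flatten_map {f : β → List α} {s : Set β} (hne : ∀ b ∈ s, f b ≠ [])
    (hcode : ∀ b ∈ s, ∀ b' ∈ s, ∀ r r' : List α, f b ++ r = f b' ++ r' → b = b') :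
    Set.InjOn (fun bs : List β => (bs.map f).flatten) {bs | ∀ b ∈ bs, b ∈ s} := by
  intro bs hbs bs' hbs' h
  induction bs generalizing bs' with
  | nil =>
    cases bs' with
    | nil => rfl
    | cons b' bs' => simp [hne b' (hbs' b' List.mem_cons_self)] at h
  | cons b bs ih =>
    cases bs' with
    | nil => simp [hne b (hbs b List.mem_cons_self)] at h
    | cons b' bs' =>
      simp only [List.map_cons, List.flatten_cons] at h
      obtain rfl := hcode b (hbs b List.mem_cons_self) b' (hbs' b' List.mem_cons_self) _ _ h
      rw [ih (fun c hc => hbs c (List.mem_cons_of_mem b hc))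
        (fun c hc => hbs' c (List.mem_cons_of_mem b hc)) (List.append_cancel_left h)]

end PrefixNonneg

def dyckHeight (b : Bool) : ℤ := if b then 1 else -1

theorem sum_map_dyckHeight (l : List Bool) :
    (l.map dyckHeight).sum = l.count true - l.count false := by
  induction l with
  | nil => simp
  | cons b l ih => cases b <;> simp [dyckHeight, ih] <;> ring

theorem isDyckWord_iff (p : List Bool) :
    IsDyckWord p ↔ PrefixNonneg 0 (p.map dyckHeight) ∧ (p.map dyckHeight).sum = 0 := by
  simp only [IsDyckWord, PrefixNonneg, ← List.map_take, sum_map_dyckHeight, zero_add, sub_nonneg,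
    sub_eq_zero, Nat.cast_le, Nat.cast_inj]

def dyckWord (ks : List ℕ) : List Bool :=
  (ks.map fun k => List.replicate k true ++ [false]).flatten

@[simp] theorem dyckWord_cons (k : ℕ) (ks : List ℕ) :
    dyckWord (k :: ks) = List.replicate k true ++ false :: dyckWord ks := by
  simp [dyckWord]

@[simp] theorem length_dyckWord (ks : List ℕ) : (dyckWord ks).length = ks.sum + ks.length := by
  induction ks with
  | nil => rfl
  | cons k ks ih => simp [ih]; omega

def IsLukasiewiczPath (n : ℕ) (ks : List ℕ) : Prop :=
  ks.length = n ∧ ks.sum = n ∧ PrefixNonneg 0 (ks.map fun k : ℕ => (k : ℤ) - 1)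

theorem sum_map_natCast_sub_one (ks : List ℕ) :
    (ks.map fun k : ℕ => (k : ℤ) - 1).sum = ks.sum - ks.length := by
  induction ks with
  | nil => rfl
  | cons k ks ih => simp [ih]; ring

theorem isDyckWord_dyckWord_and_length_iff {n : ℕ} {ks : List ℕ} :
    IsDyckWord (dyckWord ks) ∧ (dyckWord ks).length = 2 * n ↔ IsLukasiewiczPath n ks := by
  have hmap : (dyckWord ks).map dyckHeight =
      (ks.map fun k => List.replicate k (1 : ℤ) ++ [-1]).flatten := by
    induction ks with
    | nil => rfl
    | cons k ks ih => simp [ih, dyckHeight, List.map_replicate]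
  have hblocks : ∀ l ∈ ks.map fun k => List.replicate k (1 : ℤ) ++ [-1],
      ∀ j, min 0 l.sum ≤ (l.take j).sum := by
    simp only [List.mem_map]
    rintro _ ⟨k, -, rfl⟩
    exact min_zero_sum_le_take_sum (fun j => by simp [List.take_replicate]) _
  have hsum : ((ks.map fun k => List.replicate k (1 : ℤ) ++ [-1]).map List.sum) =
      ks.map fun k : ℕ => (k : ℤ) - 1 := by
    rw [List.map_map]
    congr 1
    funext k
    simp [sub_eq_add_neg]
  rw [isDyckWord_iff, hmap, prefixNonneg_flatten hblocks, List.sum_flatten, hsum,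
    IsLukasiewiczPath, length_dyckWord, sum_map_natCast_sub_one]
  constructor
  · rintro ⟨⟨hpre, htot⟩, hlen⟩
    exact ⟨by omega, by omega, hpre⟩
  · rintro ⟨hlen, htot, hpre⟩
    exact ⟨⟨hpre, by omega⟩, by omega⟩

theorem exists_eq_dyckWord_append_replicate (p : List Bool) :
    ∃ ks m, p = dyckWord ks ++ List.replicate m true := by
  induction p with
  | nil => exact ⟨[], 0, rfl⟩
  | cons b p ih =>
    obtain ⟨ks, m, rfl⟩ := ih
    cases b with
    | false => exact ⟨0 :: ks, m, rfl⟩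
    | true =>
      cases ks with
      | nil => exact ⟨[], m + 1, rfl⟩
      | cons k ks => exact ⟨(k + 1) :: ks, m, by simp [List.replicate_succ]⟩

theorem splitOn_dyckWord_append_replicate (ks : List ℕ) (m : ℕ) :
    (dyckWord ks ++ List.replicate m true).splitOn false =
      ks.map (List.replicate · true) ++ [List.replicate m true] := by
  have hrep : ∀ k, ∀ x ∈ List.replicate k true, (x == false) = false := by
    intro k x hx
    simp [List.eq_of_mem_replicate hx]
  induction ks with
  | nil => exact List.splitOnP_eq_singleton (hrep m)
  | cons k ks ih =>
    rw [dyckWord_cons, List.append_assoc, List.cons_append]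
    exact (List.splitOnP_append_cons_of_forall_mem (hrep k) false rfl _).trans
      (congrArg _ ih)

theorem splitOn_dyckWord (ks : List ℕ) :
    (dyckWord ks).splitOn false = ks.map (List.replicate · true) ++ [[]] := by
  simpa using splitOn_dyckWord_append_replicate ks 0

theorem dyckWord_injective : Function.Injective dyckWord := by
  intro ks ks' h
  simpa [splitOn_dyckWord, Function.comp_def] using
    congrArg (fun p => ((p.splitOn false).map List.length).dropLast) h

theorem ascentLengths_dyckWord (ks : List ℕ) :
    ascentLengths (dyckWord ks) = ks.filter fun k => 0 < k := by
  simp [ascentLengths, splitOn_dyckWord, Function.comp_def]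

theorem eq_zero_of_isDyckWord_append_replicate {p : List Bool} {m : ℕ}
    (h : IsDyckWord (p ++ List.replicate m true)) : m = 0 := by
  have hpre := h.1 p.length
  have htot := h.2
  simp [List.count_replicate] at hpre htot
  omega

variable {L : ℕ → α → Prop} {c₀ : α} {n : ℕ}

def ColouredLukasiewicz (n : ℕ) (L : ℕ → α → Prop) : Set (List (ℕ × α)) :=
  {bs | (∀ b ∈ bs, L b.1 b.2) ∧ IsLukasiewiczPath n (bs.map Prod.fst)}

def toColouredDyck (bs : List (ℕ × α)) : List Bool × List α :=
  (dyckWord (bs.map Prod.fst), (bs.filter fun b => 0 < b.1).map Prod.snd)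

theorem toColouredDyck_mem {bs : List (ℕ × α)} (hbs : bs ∈ ColouredLukasiewicz n L) :
    toColouredDyck bs ∈ ColouredDyck n L := by
  obtain ⟨hL, hks⟩ := hbs
  obtain ⟨hD, hlen⟩ := isDyckWord_dyckWord_and_length_iff.2 hks
  have hasc : ascentLengths (dyckWord (bs.map Prod.fst)) =
      (bs.filter fun b => 0 < b.1).map Prod.fst := by
    rw [ascentLengths_dyckWord, List.filter_map]
    rfl
  refine ⟨hD, hlen, by simp [toColouredDyck, hasc], ?_⟩
  simp only [toColouredDyck, hasc, List.zip_map', List.mem_map, List.mem_filter]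
  rintro _ ⟨b, ⟨hb, -⟩, rfl⟩
  exact hL b hb

theorem injOn_toColouredDyck (hL0 : ∀ c, L 0 c → c = c₀) :
    Set.InjOn toColouredDyck {bs : List (ℕ × α) | ∀ b ∈ bs, L b.1 b.2} := by
  intro bs hbs bs' hbs' h
  simp only [toColouredDyck, Prod.mk.injEq] at h
  obtain ⟨hfst, hsnd⟩ := h
  replace hfst := dyckWord_injective hfst
  induction bs generalizing bs' with
  | nil => exact (List.map_eq_nil_iff.1 hfst.symm).symm
  | cons b bs ih =>
    obtain _ | ⟨b', bs'⟩ := bs'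
    · simp at hfst
    obtain ⟨k, c⟩ := b
    obtain ⟨k', c'⟩ := b'
    obtain ⟨hb, htail⟩ := List.forall_mem_cons.1 hbs
    obtain ⟨hb', htail'⟩ := List.forall_mem_cons.1 hbs'
    simp only [List.map_cons, List.cons.injEq] at hfst
    obtain ⟨rfl, hfst⟩ := hfst
    rcases Nat.eq_zero_or_pos k with rfl | hk
    · simp only [List.filter_cons, lt_self_iff_false, decide_false] at hsnd
      rw [hL0 c hb, hL0 c' hb', ih htail htail' hsnd hfst]
    · simp only [List.filter_cons, hk, decide_true, ↓reduceIte, List.map_cons,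
        List.cons.injEq] at hsnd
      rw [hsnd.1, ih htail htail' hsnd.2 hfst]

theorem exists_colouring (hL0 : L 0 c₀) (ks : List ℕ) (cs : List α)
    (hlen : cs.length = (ks.filter fun k => 0 < k).length)
    (hcs : ∀ q ∈ (ks.filter fun k => 0 < k).zip cs, L q.1 q.2) :
    ∃ bs : List (ℕ × α), (∀ b ∈ bs, L b.1 b.2) ∧ bs.map Prod.fst = ks ∧
      (bs.filter fun b => 0 < b.1).map Prod.snd = cs := by
  induction ks generalizing cs with
  | nil => exact ⟨[], by simp, rfl, (List.length_eq_zero_iff.1 (by simpa using hlen)).symm⟩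
  | cons k ks ih =>
    rcases Nat.eq_zero_or_pos k with rfl | hk
    · obtain ⟨bs, hL, hfst, hsnd⟩ := ih cs (by simpa using hlen) (by simpa using hcs)
      exact ⟨(0, c₀) :: bs, List.forall_mem_cons.2 ⟨hL0, hL⟩, by simp [hfst],
        by simpa using hsnd⟩
    · obtain _ | ⟨c, cs⟩ := cs
      · simp [hk] at hlen
      simp only [List.filter_cons, hk, decide_true, List.zip_cons_cons, List.forall_mem_cons,
        List.length_cons, ite_true, Nat.add_right_cancel_iff] at hlen hcs
      obtain ⟨bs, hL, hfst, hsnd⟩ := ih cs hlen hcs.2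
      exact ⟨(k, c) :: bs, List.forall_mem_cons.2 ⟨hcs.1, hL⟩, by simp [hfst],
        by simp [hk, hsnd]⟩

theorem exists_toColouredDyck_eq (hL0 : L 0 c₀) {pc : List Bool × List α}
    (hpc : pc ∈ ColouredDyck n L) :
    ∃ bs ∈ ColouredLukasiewicz n L, toColouredDyck bs = pc := by
  obtain ⟨p, cs⟩ := pc
  obtain ⟨hD, hlen, hcs, hzip⟩ := hpc
  obtain ⟨ks, m, rfl⟩ := exists_eq_dyckWord_append_replicate p
  obtain rfl := eq_zero_of_isDyckWord_append_replicate hD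
  simp only [List.replicate_zero, List.append_nil, ascentLengths_dyckWord] at hD hlen hcs hzip ⊢
  obtain ⟨bs, hL, rfl, rfl⟩ := exists_colouring hL0 ks cs hcs hzip
  exact ⟨bs, ⟨hL, isDyckWord_dyckWord_and_length_iff.1 ⟨hD, hlen⟩⟩, rfl⟩

theorem card_colouredDyck_eq_card_colouredLukasiewicz (hL0 : ∀ c, L 0 c ↔ c = c₀) :
    Nat.card (ColouredDyck n L) = Nat.card (ColouredLukasiewicz n L) := by
  refine (Nat.card_eq_of_bijective
    (fun bs => ⟨toColouredDyck bs.1, toColouredDyck_mem bs.2⟩)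
    ⟨fun bs bs' h => ?_, fun pc => ?_⟩).symm
  · exact Subtype.ext <| injOn_toColouredDyck (fun c => (hL0 c).1) bs.2.1 bs'.2.1
      (congrArg Subtype.val h)
  · obtain ⟨bs, hbs, h⟩ := exists_toColouredDyck_eq ((hL0 c₀).2 rfl) pc.2
    exact ⟨⟨bs, hbs⟩, Subtype.ext h⟩

variable {k : ℕ}

def IsSchroederStep (s : ℤ × ℤ) : Prop := s = (1, 1) ∨ s = (1, -1) ∨ s = (2, 0)

def IsTStep (t : ℤ × ℤ) : Prop := t = (1, 2) ∨ t = (2, 1) ∨ t = (1, -1)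

def lift (s : ℤ × ℤ) : ℤ × ℤ :=
  if s = (1, 1) then (1, 2) else if s = (2, 0) then (2, 1) else s

def lower (t : ℤ × ℤ) : ℤ × ℤ :=
  if t = (1, 2) then (1, 1) else if t = (2, 1) then (2, 0) else t

@[simp] theorem lower_down : lower (1, -1) = (1, -1) := by decide

namespace IsSchroederStep

variable {s : ℤ × ℤ} (hs : IsSchroederStep s)
include hs

theorem isTStep_lift : IsTStep (lift s) := by
  unfold IsTStep
  rcases hs with rfl | rfl | rfl <;> decide

theorem lower_lift : lower (lift s) = s := by
  rcases hs with rfl | rfl | rfl <;> decide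

theorem fst_lift : (lift s).1 = s.1 := by
  rcases hs with rfl | rfl | rfl <;> decide

/-- On Schröder steps `lift` agrees with the linear map `(x, y) ↦ (x, (x + 3y) / 2)`. -/
theorem two_mul_snd_lift : 2 * (lift s).2 = s.1 + 3 * s.2 := by
  rcases hs with rfl | rfl | rfl <;> decide

theorem one_le_fst : 1 ≤ s.1 := by
  rcases hs with rfl | rfl | rfl <;> decide

end IsSchroederStep

namespace IsTStep

variable {t : ℤ × ℤ} (ht : IsTStep t)
include ht

theorem isSchroederStep_lower : IsSchroederStep (lower t) := by
  unfold IsSchroederStep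
  rcases ht with rfl | rfl | rfl <;> decide

theorem lift_lower : lift (lower t) = t := by
  rcases ht with rfl | rfl | rfl <;> decide

theorem neg_one_le_snd_lower : -1 ≤ (lower t).2 := by
  rcases ht with rfl | rfl | rfl <;> decide

theorem eq_down_of_snd_lower (h : (lower t).2 = -1) : t = (1, -1) := by
  rcases ht with rfl | rfl | rfl <;> simp_all [lower]

theorem one_le_fst : 1 ≤ t.1 := by
  rcases ht with rfl | rfl | rfl <;> decide

end IsTStep

section Lists

variable {c : List (ℤ × ℤ)} (hc : ∀ s ∈ c, IsSchroederStep s)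
include hc

theorem map_lower_map_lift : (c.map lift).map lower = c := by
  rw [List.map_map]
  exact List.map_congr_left (fun s hs => (hc s hs).lower_lift) |>.trans c.map_id

theorem sum_fst_map_lift : ((c.map lift).map Prod.fst).sum = (c.map Prod.fst).sum := by
  rw [List.map_map]
  exact congrArg List.sum (List.map_congr_left fun s hs => (hc s hs).fst_lift)

theorem two_mul_sum_snd_map_lift :
    2 * ((c.map lift).map Prod.snd).sum = (c.map Prod.fst).sum + 3 * (c.map Prod.snd).sum := by
  induction c with
  | nil => rfl
  | cons s c ih =>
    rw [List.forall_mem_cons] at hc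
    have := hc.1.two_mul_snd_lift
    simp only [List.map_cons, List.sum_cons]
    linarith [ih hc.2]

theorem sum_fst_nonneg : 0 ≤ (c.map Prod.fst).sum :=
  List.sum_nonneg fun x hx => by
    obtain ⟨s, hs, rfl⟩ := List.mem_map.1 hx
    linarith [(hc s hs).one_le_fst]

end Lists

theorem map_lift_map_lower {q : List (ℤ × ℤ)} (hq : ∀ t ∈ q, IsTStep t) :
    (q.map lower).map lift = q := by
  rw [List.map_map]
  exact List.map_congr_left (fun t ht => (hq t ht).lift_lower) |>.trans q.map_id

theorem isSchroederPath_iff {c : List (ℤ × ℤ)} :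
    IsSchroederPath k c ↔ (∀ s ∈ c, IsSchroederStep s) ∧ (c.map Prod.fst).sum = 2 * k ∧
      (c.map Prod.snd).sum = 0 ∧ PrefixNonneg 0 (c.map Prod.snd) := by
  simp only [IsSchroederPath, PrefixNonneg, ← List.map_take, zero_add]
  rfl

theorem isTPath_iff {q : List (ℤ × ℤ)} :
    IsTPath n q ↔ (∀ t ∈ q, IsTStep t) ∧ (q.map Prod.fst).sum = 3 * n ∧
      (q.map Prod.snd).sum = 0 ∧ PrefixNonneg 0 (q.map Prod.snd) := by
  simp only [IsTPath, PrefixNonneg, ← List.map_take, zero_add]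
  rfl

theorem isSchroederPath_zero_iff {c : List (ℤ × ℤ)} : IsSchroederPath 0 c ↔ c = [] := by
  refine ⟨fun hc => ?_, fun hc => by simp [hc, isSchroederPath_iff]⟩
  obtain ⟨hsteps, hx, -⟩ := isSchroederPath_iff.1 hc
  by_contra hne
  have := List.sum_pos (c.map Prod.fst) (fun x hx => by
    obtain ⟨s, hs, rfl⟩ := List.mem_map.1 hx
    linarith [(hsteps s hs).one_le_fst]) (by simpa using hne)
  simp_all

def tBlock (c : List (ℤ × ℤ)) : List (ℤ × ℤ) := c.map lift ++ [(1, -1)]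

def tPath (bs : List (ℕ × List (ℤ × ℤ))) : List (ℤ × ℤ) := (bs.map fun b => tBlock b.2).flatten

theorem sum_map_tPath (f : ℤ × ℤ → ℤ) (bs : List (ℕ × List (ℤ × ℤ))) :
    ((tPath bs).map f).sum = (bs.map fun b => ((tBlock b.2).map f).sum).sum := by
  simp [tPath, List.map_flatten, List.sum_flatten, Function.comp_def]

end ColouredDyckSchroeder

namespace IsSchroederPath

open ColouredDyckSchroeder

variable {k : ℕ} {c : List (ℤ × ℤ)} (hc : IsSchroederPath k c)
include hc

theorem isSchroederStep : ∀ s ∈ c, IsSchroederStep s := hc.1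

theorem semilength_unique {k' : ℕ} (hc' : IsSchroederPath k' c) : k = k' := by
  have := hc.2.1.symm.trans hc'.2.1
  omega

theorem isTStep_of_mem_tBlock : ∀ t ∈ tBlock c, IsTStep t := by
  simp only [tBlock, List.mem_append, List.mem_map, List.mem_singleton]
  rintro t (⟨s, hs, rfl⟩ | rfl)
  · exact (hc.isSchroederStep s hs).isTStep_lift
  · exact Or.inr (Or.inr rfl)

theorem sum_fst_tBlock : ((tBlock c).map Prod.fst).sum = 2 * k + 1 := by
  rw [tBlock, List.map_append, List.sum_append, sum_fst_map_lift hc.isSchroederStep, hc.2.1]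
  simp

theorem sum_snd_map_lift : ((c.map lift).map Prod.snd).sum = k := by
  have := two_mul_sum_snd_map_lift hc.isSchroederStep
  rw [hc.2.1, hc.2.2.1] at this
  omega

theorem sum_snd_tBlock : ((tBlock c).map Prod.snd).sum = k - 1 := by
  rw [tBlock, List.map_append, List.sum_append, hc.sum_snd_map_lift]
  simp [sub_eq_add_neg]

theorem prefixNonneg_snd_map_lift : PrefixNonneg 0 ((c.map lift).map Prod.snd) := by
  intro j
  have hsub : ∀ s ∈ c.take j, IsSchroederStep s := fun s hs =>
    hc.isSchroederStep s (List.mem_of_mem_take hs)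
  have := two_mul_sum_snd_map_lift hsub
  have := sum_fst_nonneg hsub
  have := isSchroederPath_iff.1 hc |>.2.2.2 j
  simp only [List.map_take] at *
  omega

end IsSchroederPath

namespace ColouredDyckSchroeder

variable {n : ℕ}

theorem isTPath_tPath_iff {bs : List (ℕ × List (ℤ × ℤ))}
    (hbs : ∀ b ∈ bs, IsSchroederPath b.1 b.2) :
    IsTPath n (tPath bs) ↔ IsLukasiewiczPath n (bs.map Prod.fst) := by
  have hsteps : ∀ t ∈ tPath bs, IsTStep t := by
    simp only [tPath, List.mem_flatten, List.mem_map]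
    rintro t ⟨_, ⟨b, hb, rfl⟩, ht⟩
    exact (hbs b hb).isTStep_of_mem_tBlock t ht
  have hx : ((tPath bs).map Prod.fst).sum = 2 * (bs.map Prod.fst).sum + bs.length := by
    rw [sum_map_tPath, List.map_congr_left fun b hb => (hbs b hb).sum_fst_tBlock]
    clear hbs hsteps
    induction bs with
    | nil => rfl
    | cons b bs ih => simp [ih]; ring
  have hblocks : (bs.map fun b => ((tBlock b.2).map Prod.snd).sum) =
      (bs.map Prod.fst).map fun k : ℕ => (k : ℤ) - 1 := by
    rw [List.map_map]
    exact List.map_congr_left fun b hb => (hbs b hb).sum_snd_tBlock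
  have hpre : PrefixNonneg 0 ((tPath bs).map Prod.snd) ↔
      PrefixNonneg 0 ((bs.map Prod.fst).map fun k : ℕ => (k : ℤ) - 1) := by
    rw [tPath, List.map_flatten, prefixNonneg_flatten, ← hblocks]
    · simp only [List.map_map]
      rfl
    · simp only [List.map_map, List.mem_map]
      rintro _ ⟨b, hb, rfl⟩
      have := min_zero_sum_le_take_sum (hbs b hb).prefixNonneg_snd_map_lift (-1)
      simpa [tBlock] using this
  rw [isTPath_iff, hx, sum_map_tPath, hblocks, sum_map_natCast_sub_one, hpre, IsLukasiewiczPath,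
    List.length_map]
  constructor
  · rintro ⟨-, hxsum, hysum, hprefix⟩
    exact ⟨by omega, by omega, hprefix⟩
  · rintro ⟨hlen, hsum, hprefix⟩
    exact ⟨hsteps, by omega, by omega, hprefix⟩

theorem injOn_tPath : Set.InjOn tPath {bs | ∀ b ∈ bs, IsSchroederPath b.1 b.2} := by
  refine injOn_flatten_map (f := fun b : ℕ × List (ℤ × ℤ) => tBlock b.2)
    (s := {b | IsSchroederPath b.1 b.2}) (fun b _ => by simp [tBlock]) ?_
  rintro ⟨k, c⟩ (hc : IsSchroederPath k c) ⟨k', c'⟩ (hc' : IsSchroederPath k' c') r r' h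
  obtain ⟨hsteps, -, hsum, hpre⟩ := isSchroederPath_iff.1 hc
  obtain ⟨hsteps', -, hsum', hpre'⟩ := isSchroederPath_iff.1 hc'
  have h := congrArg (List.map lower) h
  simp only [tBlock, List.append_assoc, List.singleton_append, List.map_append, List.map_cons,
    map_lower_map_lift hsteps, map_lower_map_lift hsteps', lower_down] at h
  obtain rfl : c = c' := eq_of_append_cons_eq (w := Prod.snd) (by norm_num) (by norm_num)
    hpre hpre' hsum hsum' h
  rw [hc.semilength_unique hc']

/-- First-return decomposition. The hypothesis says that `q.map lower` ends below `0`. -/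
theorem exists_eq_tBlock_append {q : List (ℤ × ℤ)} (hq : ∀ t ∈ q, IsTStep t)
    (hlow : 2 * (q.map Prod.snd).sum < (q.map Prod.fst).sum) :
    ∃ k c r, IsSchroederPath k c ∧ q = tBlock c ++ r := by
  have hlowered : ∀ s ∈ q.map lower, IsSchroederStep s := by
    simp only [List.mem_map]
    rintro _ ⟨t, ht, rfl⟩
    exact (hq t ht).isSchroederStep_lower
  have hneg : 0 + (q.map fun t => (lower t).2).sum < 0 := by
    have hfst : ((q.map lower).map Prod.fst).sum = (q.map Prod.fst).sum := by
      rw [← sum_fst_map_lift hlowered, map_lift_map_lower hq]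
    have := two_mul_sum_snd_map_lift hlowered
    rw [map_lift_map_lower hq, hfst, List.map_map] at this
    simp only [Function.comp_def] at this
    omega
  obtain ⟨a, t, r, rfl, ht, hpre, hsum⟩ := exists_eq_append_cons_of_sum_neg
    (fun t h => (hq t h).neg_one_le_snd_lower) le_rfl hneg
  have ha : ∀ t ∈ a, IsTStep t := fun t h => hq t (by simp [h])
  obtain rfl := (hq t (by simp)).eq_down_of_snd_lower ht
  set c := a.map lower
  have hcsteps : ∀ s ∈ c, IsSchroederStep s := fun s hs => hlowered s (by simp_all [c])
  have hcsnd : c.map Prod.snd = a.map fun t => (lower t).2 := List.map_map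
  have hx : (c.map Prod.fst).sum = 2 * (a.map Prod.snd).sum := by
    have := two_mul_sum_snd_map_lift hcsteps
    rw [map_lift_map_lower ha, hcsnd] at this
    omega
  have hy : 0 ≤ (a.map Prod.snd).sum := by linarith [sum_fst_nonneg hcsteps]
  refine ⟨(a.map Prod.snd).sum.toNat, c, r, ?_, by simp [tBlock, c, map_lift_map_lower ha]⟩
  exact isSchroederPath_iff.2 ⟨hcsteps, by rw [hx]; omega, by rw [hcsnd]; simpa using hsum,
    by rw [hcsnd]; exact hpre⟩

theorem exists_tPath_eq {h : ℤ} {q : List (ℤ × ℤ)} (hq : ∀ t ∈ q, IsTStep t)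
    (hpre : PrefixNonneg h (q.map Prod.snd)) (hend : h + (q.map Prod.snd).sum = 0) :
    ∃ bs : List (ℕ × List (ℤ × ℤ)), (∀ b ∈ bs, IsSchroederPath b.1 b.2) ∧ tPath bs = q := by
  obtain rfl | hne := eq_or_ne q []
  · exact ⟨[], by simp, rfl⟩
  have hx : 0 < (q.map Prod.fst).sum := List.sum_pos _ (fun x hx => by
    obtain ⟨t, ht, rfl⟩ := List.mem_map.1 hx
    linarith [(hq t ht).one_le_fst]) (by simpa using hne)
  obtain ⟨k, c, r, hc, rfl⟩ := exists_eq_tBlock_append hq (by linarith [hpre.nonneg])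
  rw [List.map_append, prefixNonneg_append, hc.sum_snd_tBlock] at hpre
  rw [List.map_append, List.sum_append, hc.sum_snd_tBlock] at hend
  have : r.length < (tBlock c ++ r).length := by simp [tBlock]; omega
  obtain ⟨bs, hbs, rfl⟩ :=
    exists_tPath_eq (fun t ht => hq t (by simp [ht])) hpre.2 (by linarith)
  exact ⟨(k, c) :: bs, List.forall_mem_cons.2 ⟨hc, hbs⟩, rfl⟩
termination_by q.length

theorem card_colouredLukasiewicz_eq_card_tPath : Nat.card (ColouredLukasiewicz n IsSchroederPath) =
    Nat.card {q : List (ℤ × ℤ) // IsTPath n q} := by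
  refine Nat.card_eq_of_bijective (fun bs => ⟨tPath bs.1, (isTPath_tPath_iff bs.2.1).2 bs.2.2⟩)
    ⟨fun bs bs' h => ?_, fun q => ?_⟩
  · exact Subtype.ext <| injOn_tPath bs.2.1 bs'.2.1 (congrArg Subtype.val h)
  · obtain ⟨hsteps, -, hend, hpre⟩ := isTPath_iff.1 q.2
    obtain ⟨bs, hbs, hq⟩ := exists_tPath_eq hsteps hpre (by simpa using hend)
    exact ⟨⟨bs, hbs, (isTPath_tPath_iff hbs).1 (hq ▸ q.2)⟩, Subtype.ext hq⟩

end ColouredDyckSchroeder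

/-- Dyck paths of length `2n` with each `k`-ascent coloured by a
Schröder path of length `2k` are equinumerous with lattice paths from `(0,0)`
to `(3n,0)` with steps `(1,2)`, `(2,1)`, `(1,-1)` staying weakly above the
x-axis. -/
theorem coloured_dyck_schroeder_eq_tpaths (n : ℕ) :
    Nat.card (ColouredDyck n (fun k c => IsSchroederPath k c)) =
      Nat.card {p : List (ℤ × ℤ) // IsTPath n p} :=
  calc Nat.card (ColouredDyck n IsSchroederPath)
      = Nat.card (ColouredDyckSchroeder.ColouredLukasiewicz n IsSchroederPath) :=
        ColouredDyckSchroeder.card_colouredDyck_eq_card_colouredLukasiewicz fun _ =>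
          ColouredDyckSchroeder.isSchroederPath_zero_iff
    _ = Nat.card {p : List (ℤ × ℤ) // IsTPath n p} :=
        ColouredDyckSchroeder.card_colouredLukasiewicz_eq_card_tPath
end
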